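/- arXiv:1001.1554 — 3 statements merged into one kernel-verified Lean document; each statement's English description precedes it below -/
import Mathlib

section
/- With notation as in the two-term complex b: (⊕_{v ∈ V^f} N) ⊕ (⊕_{e ∈ E^b} N_e) → ⊕_{e ∈ E^b} N defining E¹(Γ) and E²(Γ): for a field K, the equality E¹_K(Γ) = E¹(Γ) ⊗_ℤ K holds if and only if the order of the torsion subgroup of E²(Γ) is prime to the characteristic of K. -/
open TensorProduct

def eps {Vf Eb : Type} [DecidableEq Vf] (src tgt : Eb → Vf) (e : Eb) (v : Vf) : ℤ :=
  (if tgt e = v then 1 else 0) - (if src e = v then 1 else 0)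

noncomputable def bMap {n : ℕ} {Vf Eb : Type} [Fintype Vf] [Fintype Eb] [DecidableEq Vf]
    (src tgt : Eb → Vf) (Ne : Eb → Submodule ℤ (Fin n → ℤ)) :
    ((Vf → Fin n → ℤ) × ((e : Eb) → Ne e)) →ₗ[ℤ] (Eb → Fin n → ℤ) :=
  LinearMap.pi fun e =>
    ((∑ v : Vf, eps src tgt e v • LinearMap.proj v).comp
        (LinearMap.fst ℤ (Vf → Fin n → ℤ) ((e : Eb) → Ne e))) +
    ((Ne e).subtype.comp ((LinearMap.proj e).comp
        (LinearMap.snd ℤ (Vf → Fin n → ℤ) ((e : Eb) → Ne e))))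

/-- The natural map `E¹(Γ) ⊗ K → E¹_K(Γ) = ker (b ⊗ K)`. -/
noncomputable def kerComparison {n : ℕ} {Vf Eb : Type} [Fintype Vf] [Fintype Eb]
    [DecidableEq Vf] (src tgt : Eb → Vf) (Ne : Eb → Submodule ℤ (Fin n → ℤ))
    (K : Type) [Field K] :
    ((LinearMap.ker (bMap src tgt Ne)) ⊗[ℤ] K) →ₗ[ℤ]
      (LinearMap.ker ((bMap src tgt Ne).rTensor K)) :=
  LinearMap.codRestrict _ ((LinearMap.ker (bMap src tgt Ne)).subtype.rTensor K) (by
    have h0 : (bMap src tgt Ne).comp (LinearMap.ker (bMap src tgt Ne)).subtype = 0 := by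
      apply LinearMap.ext; intro x
      simpa using x.2
    have key : ∀ w, (bMap src tgt Ne).rTensor K
        ((LinearMap.ker (bMap src tgt Ne)).subtype.rTensor K w) = 0 := by
      intro w
      rw [← LinearMap.comp_apply, ← LinearMap.rTensor_comp, h0]
      simp
    intro z
    exact LinearMap.mem_ker.mpr (key z))

lemma natAbs_cast_eq_zero_iff {K : Type} [AddGroupWithOne K] (m : ℤ) :
    ((m.natAbs : K) = 0) ↔ ((m : K) = 0) := by
  rcases Int.natAbs_eq m with h | h
  · conv_rhs => rw [h, Int.cast_natCast]
  · conv_rhs => rw [h, Int.cast_neg, Int.cast_natCast]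
    rw [neg_eq_zero]

section R
variable {R : Type} [CommRing R]

/-- torsion submodules correspond under a linear equivalence -/
noncomputable def torsionEquiv {M M₂ : Type} [AddCommGroup M] [AddCommGroup M₂]
    [Module R M] [Module R M₂] (e : M ≃ₗ[R] M₂) :
    Submodule.torsion R M ≃ Submodule.torsion R M₂ where
  toFun x := ⟨e x, by
    obtain ⟨a, ha⟩ := x.2
    have ha' : (a : R) • (x : M) = 0 := ha
    exact ⟨a, show (a : R) • (e x : M₂) = 0 by rw [← map_smul e, ha', map_zero]⟩⟩
  invFun y := ⟨e.symm y, by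
    obtain ⟨a, ha⟩ := y.2
    have ha' : (a : R) • (y : M₂) = 0 := ha
    exact ⟨a, show (a : R) • (e.symm y : M) = 0 by rw [← map_smul e.symm, ha', map_zero]⟩⟩
  left_inv x := by ext; simp
  right_inv y := by ext; simp

lemma card_torsion_eq {M M₂ : Type} [AddCommGroup M] [AddCommGroup M₂]
    [Module R M] [Module R M₂] (e : M ≃ₗ[R] M₂) :
    Nat.card (Submodule.torsion R M) = Nat.card (Submodule.torsion R M₂) :=
  Nat.card_congr (torsionEquiv e)

lemma torsion_pi {ι : Type} [Fintype ι] {Ms : ι → Type} [∀ i, AddCommGroup (Ms i)]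
    [∀ i, Module R (Ms i)] :
    Submodule.torsion R (∀ i, Ms i) =
      Submodule.pi Set.univ (fun i => Submodule.torsion R (Ms i)) := by
  ext x
  simp only [Submodule.mem_torsion_iff, Submodule.mem_pi, Set.mem_univ, true_implies]
  classical
  constructor
  · rintro ⟨a, ha⟩ i
    exact ⟨a, by have := congrFun ha i; simpa using this⟩
  · intro h
    choose c hc using h
    refine ⟨∏ i, c i, ?_⟩
    funext i
    have hxi : (c i : R) • x i = 0 := hc i
    have hp : ((∏ j, c j : nonZeroDivisors R) : R) =
        (∏ j ∈ Finset.univ.erase i, (c j : R)) * (c i : R) := by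
      push_cast
      rw [Finset.prod_erase_mul _ _ (Finset.mem_univ i)]
    show ((∏ j, c j : nonZeroDivisors R) : R) • x i = 0
    rw [hp, mul_smul, hxi, smul_zero]

def piSubmoduleEquiv {ι : Type} {Ms : ι → Type} [∀ i, AddCommGroup (Ms i)]
    [∀ i, Module R (Ms i)] (p : ∀ i, Submodule R (Ms i)) :
    (Submodule.pi Set.univ p) ≃ ∀ i, p i where
  toFun x i := ⟨x.1 i, Submodule.mem_pi.mp x.2 i (Set.mem_univ i)⟩
  invFun y := ⟨fun i => y i, Submodule.mem_pi.mpr fun i _ => (y i).2⟩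
  left_inv x := rfl
  right_inv y := rfl

end R

lemma card_torsion_int_quot' (α : ℤ) :
    Nat.card (Submodule.torsion ℤ (ℤ ⧸ Ideal.span ({α} : Set ℤ))) =
      if α = 0 then 1 else α.natAbs := by
  split_ifs with h
  · subst h
    have hbot : Submodule.torsion ℤ (ℤ ⧸ Ideal.span ({(0:ℤ)} : Set ℤ)) = ⊥ := by
      rw [Submodule.eq_bot_iff]
      rintro x ⟨a, ha⟩
      obtain ⟨y, rfl⟩ := Submodule.Quotient.mk_surjective _ x
      have ha' : (a : ℤ) • Submodule.Quotient.mk y = (0 : ℤ ⧸ Ideal.span ({(0:ℤ)} : Set ℤ)) := ha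
      have hmem : (a : ℤ) • y ∈ Ideal.span ({(0:ℤ)} : Set ℤ) := by
        rwa [← Submodule.Quotient.mk_eq_zero, Submodule.Quotient.mk_smul]
      rw [Ideal.span_singleton_eq_bot.mpr rfl] at hmem
      simp only [Submodule.mem_bot, smul_eq_mul, mul_eq_zero] at hmem
      rcases hmem with h | h
      · exact absurd h (nonZeroDivisors.coe_ne_zero a)
      · simp [h]
    rw [hbot]
    simp
  · have htop : Submodule.torsion ℤ (ℤ ⧸ Ideal.span ({α} : Set ℤ)) = ⊤ := by
      rw [eq_top_iff]
      rintro x -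
      obtain ⟨y, rfl⟩ := Submodule.Quotient.mk_surjective _ x
      refine ⟨⟨α, mem_nonZeroDivisors_of_ne_zero h⟩, ?_⟩
      show (α : ℤ) • Submodule.Quotient.mk y = (0 : ℤ ⧸ Ideal.span ({α} : Set ℤ))
      rw [← Submodule.Quotient.mk_smul, Submodule.Quotient.mk_eq_zero, smul_eq_mul]
      exact Ideal.mem_span_singleton.mpr (Dvd.intro y (by ring))
    rw [htop, Nat.card_congr Submodule.topEquiv.toEquiv,
      Nat.card_congr (Int.quotientSpanEquivZMod α).toEquiv, Nat.card_zmod]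

variable {R M ι : Type} [CommRing R] [AddCommGroup M] [Module R M] [Fintype ι] [DecidableEq ι]

lemma snf_map_pi {N : Submodule R M} {m : ℕ} (snf : Module.Basis.SmithNormalForm N ι m) :
    N.map (snf.bM.equivFun : M →ₗ[R] ι → R) = Submodule.pi Set.univ
      (fun i => Ideal.span {if h : ∃ j, snf.f j = i then snf.a h.choose else 0}) := by
  classical
  rcases snf with ⟨bM, bN, f, a, snf⟩
  dsimp only
  set N' : Submodule R (ι → R) := N.map (bM.equivFun : M →ₗ[R] ι → R) with hN'
  let bN' : Module.Basis (Fin m) R N' := bN.map (bM.equivFun.submoduleMap N)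
  have snf' : ∀ i, (bN' i : ι → R) = Pi.single (f i) (a i) := by
    intro i
    simp only [Module.Basis.map_apply, bN']
    erw [LinearEquiv.submoduleMap_apply]
    simp only [Module.Basis.equivFun_apply, snf, map_smul, Module.Basis.repr_self, Finsupp.single_eq_pi_single]
    ext j
    simp [Pi.single_apply]
  ext g
  simp only [Submodule.mem_pi, bN'.mem_submodule_iff', snf', Set.mem_univ,
    true_implies, Ideal.mem_span_singleton]
  refine ⟨fun h ↦ ?_, fun h ↦ ?_⟩
  · rcases h with ⟨c, rfl⟩
    intro i
    simp only [Finset.sum_apply, Pi.smul_apply, Pi.single_apply]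
    split_ifs with h
    · convert dvd_mul_left (a h.choose) (c h.choose)
      calc ∑ x : Fin m, _ = c h.choose * if i = f h.choose then a h.choose else 0 := by
            refine Finset.sum_eq_single h.choose ?_ (by simp)
            rintro j - hj
            have hinj := f.injective.ne hj
            rw [h.choose_spec] at hinj
            simp [hinj.symm]
        _ = c h.choose * a h.choose := by simp [h.choose_spec]
    · convert dvd_refl (0 : R)
      convert Finset.sum_const_zero with j
      rw [not_exists] at h
      specialize h j
      rw [eq_comm] at h
      simp [h]
  · refine ⟨fun j ↦ (h (f j)).choose, ?_⟩
    ext i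
    simp only [EmbeddingLike.apply_eq_iff_eq, exists_eq, ↓reduceDIte, Classical.choose_eq,
      Finset.sum_apply, Pi.smul_apply, Pi.single_apply, smul_ite, smul_zero]
    rw [eq_comm]
    by_cases hj : ∃ j, f j = i
    · calc ∑ x : Fin m, _ =
          if i = f hj.choose then (h (f hj.choose)).choose * a hj.choose else 0 := by
            convert Finset.sum_eq_single (M := R) hj.choose ?_ ?_
            · simp [hj]
            · rintro j - h
              have hinj := f.injective.ne h
              rw [hj.choose_spec] at hinj
              simp [hinj.symm]
            · simp
        _ = g i := by
            simp only [hj.choose_spec, ↓reduceIte]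
            rw [mul_comm]
            conv_rhs =>
              rw [← hj.choose_spec, (h (f hj.choose)).choose_spec]
            simp only [EmbeddingLike.apply_eq_iff_eq, exists_eq, ↓reduceDIte, Classical.choose_eq]
            congr!
            · exact hj.choose_spec.symm
            · simp [hj]
    · convert Finset.sum_const_zero with x
      · rw [not_exists] at hj
        specialize hj x
        rw [eq_comm] at hj
        simp [hj]
      · rw [← zero_dvd_iff]
        convert h i
        simp [hj]

lemma snf_a_ne_zero [Nontrivial R] [NoZeroSMulDivisors R M] {N : Submodule R M} {m : ℕ}
    (snf : Module.Basis.SmithNormalForm N ι m) (j : Fin m) : snf.a j ≠ 0 := by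
  intro h0
  have := snf.snf j
  rw [h0, zero_smul] at this
  exact Module.Basis.ne_zero snf.bN j (Subtype.ext this)

noncomputable def quotEquivPiSnf {N : Submodule R M} {m : ℕ}
    (snf : Module.Basis.SmithNormalForm N ι m) :
    (M ⧸ N) ≃ₗ[R] ∀ i : ι, R ⧸ Ideal.span
      ({if h : ∃ j, snf.f j = i then snf.a h.choose else 0} : Set R) :=
  (Submodule.Quotient.equiv N _ snf.bM.equivFun rfl).trans
    ((Submodule.quotEquivOfEq _ _ (snf_map_pi snf)).trans (Submodule.quotientPi _))

lemma card_torsion_int_quot (α : ℤ) (inst : Module ℤ (ℤ ⧸ Ideal.span ({α} : Set ℤ))) :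
    Nat.card (@Submodule.torsion ℤ (ℤ ⧸ Ideal.span ({α} : Set ℤ)) _ _ inst) =
      if α = 0 then 1 else α.natAbs := by
  have h := congrArg
    (fun (i : Module ℤ (ℤ ⧸ Ideal.span ({α} : Set ℤ))) =>
      Nat.card (@Submodule.torsion ℤ (ℤ ⧸ Ideal.span ({α} : Set ℤ)) _ _ i))
    (@Subsingleton.elim _ AddCommGroup.uniqueIntModule.instSubsingleton inst
      (AddCommGroup.toIntModule _))
  exact h.trans (card_torsion_int_quot' α)

set_option maxHeartbeats 1000000 in
lemma card_torsion_quot_snf {M ι : Type} [AddCommGroup M] [Module ℤ M] [Fintype ι]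
    [DecidableEq ι] {N : Submodule ℤ M} {m : ℕ}
    (snf : Module.Basis.SmithNormalForm N ι m) (ha : ∀ j, snf.a j ≠ 0) (instQ : Module ℤ (M ⧸ N)) :
    Nat.card (@Submodule.torsion ℤ (M ⧸ N) _ _ instQ) =
      ∏ i : ι, (if h : ∃ j, snf.f j = i then (snf.a h.choose).natAbs else 1) := by
  have htr := congrArg
    (fun (i : Module ℤ (M ⧸ N)) => Nat.card (@Submodule.torsion ℤ (M ⧸ N) _ _ i))
    (@Subsingleton.elim _ AddCommGroup.uniqueIntModule.instSubsingleton instQ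
      (Submodule.Quotient.module N))
  refine htr.trans ?_
  have hP : ∀ i : ι, Ideal.span ({if h : ∃ j, snf.f j = i then snf.a h.choose else 0} : Set ℤ)
      = Ideal.span ({if h : ∃ j, snf.f j = i then snf.a h.choose else 0} : Set ℤ) := fun _ => rfl
  set P : ι → Ideal ℤ :=
    fun i => Ideal.span ({if h : ∃ j, snf.f j = i then snf.a h.choose else 0} : Set ℤ) with hPdef
  have h1 : Nat.card (@Submodule.torsion ℤ (M ⧸ N) _ _ (Submodule.Quotient.module N)) =
      Nat.card (@Submodule.torsion ℤ (∀ i : ι, ℤ ⧸ P i) _ _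
        (@Pi.module ι (fun i => ℤ ⧸ P i) ℤ _ _ (fun i => Submodule.Quotient.module (P i)))) :=
    @card_torsion_eq ℤ _ _ _ _ _ (Submodule.Quotient.module N)
      (@Pi.module ι (fun i => ℤ ⧸ P i) ℤ _ _ (fun i => Submodule.Quotient.module (P i)))
      (quotEquivPiSnf snf)
  refine h1.trans ?_
  have h2 := @torsion_pi ℤ _ ι _ (fun i => ℤ ⧸ P i) _
    (fun i => Submodule.Quotient.module (P i))
  refine (congrArg (fun S : Submodule ℤ (∀ i : ι, ℤ ⧸ P i) => Nat.card S) h2).trans ?_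
  refine (Nat.card_congr (@piSubmoduleEquiv ℤ _ ι (fun i => ℤ ⧸ P i) _
    (fun i => Submodule.Quotient.module (P i)) _)).trans ?_
  refine (Nat.card_pi).trans ?_
  refine Finset.prod_congr rfl fun i _ => ?_
  by_cases h : ∃ j, snf.f j = i
  · rw [dif_pos h]
    refine (card_torsion_int_quot _ _).trans ?_
    rw [dif_pos h, if_neg (ha _)]
  · rw [dif_neg h]
    refine (card_torsion_int_quot _ _).trans ?_
    rw [dif_neg h, if_pos rfl]


section Sandwich
variable {M₁ M₂ M₃ M₄ : Type} [AddCommGroup M₁] [AddCommGroup M₂] [AddCommGroup M₃]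
  [AddCommGroup M₄] [Module ℤ M₁] [Module ℤ M₂] [Module ℤ M₃] [Module ℤ M₄]

lemma inj_conj (g : M₁ →ₗ[ℤ] M₂) (h : M₃ →ₗ[ℤ] M₄) (e₁ : M₁ ≃ₗ[ℤ] M₃) (e₂ : M₂ ≃ₗ[ℤ] M₄)
    (hcomm : e₂.toLinearMap ∘ₗ g = h ∘ₗ e₁.toLinearMap) :
    Function.Injective g ↔ Function.Injective h := by
  have hfun : ∀ x, e₂ (g x) = h (e₁ x) := fun x => LinearMap.congr_fun hcomm x
  constructor
  · intro hg x y hxy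
    obtain ⟨x', rfl⟩ := e₁.surjective x
    obtain ⟨y', rfl⟩ := e₁.surjective y
    rw [← hfun, ← hfun] at hxy
    rw [hg (e₂.injective hxy)]
  · intro hh x y hxy
    have : h (e₁ x) = h (e₁ y) := by rw [← hfun, ← hfun, hxy]
    exact e₁.injective (hh this)
end Sandwich

section Phi
variable (K : Type) [Field K] (ι : Type) [Fintype ι] [DecidableEq ι]

noncomputable def phiEq : ((ι → ℤ) ⊗[ℤ] K) ≃ₗ[ℤ] (ι → K) :=
  (TensorProduct.comm ℤ (ι → ℤ) K).trans
    ((TensorProduct.piScalarRight ℤ K K ι).restrictScalars ℤ)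

lemma phiEq_tmul (x : ι → ℤ) (c : K) : phiEq K ι (x ⊗ₜ c) = fun j => x j • c := by
  show (TensorProduct.piScalarRight ℤ K K ι) (c ⊗ₜ x) = _
  rw [TensorProduct.piScalarRight_apply, TensorProduct.piScalarRightHom_tmul]
end Phi

section C1
variable {n : ℕ} {Eb : Type} [Fintype Eb] (K : Type) [Field K]

lemma inj_subtype_rTensor_iff {N : Submodule ℤ (Eb → Fin n → ℤ)} {ι : Type} [Fintype ι]
    [DecidableEq ι] {m : ℕ} (snf : Module.Basis.SmithNormalForm N ι m) :
    Function.Injective (N.subtype.rTensor K) ↔ ∀ j, ((snf.a j : K) ≠ 0) := by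
  classical
  set e1 : N ≃ₗ[ℤ] (Fin m → ℤ) := snf.bN.equivFun with he1
  set e2 : (Eb → Fin n → ℤ) ≃ₗ[ℤ] (ι → ℤ) := snf.bM.equivFun with he2
  set D : (Fin m → ℤ) →ₗ[ℤ] (ι → ℤ) := e2.toLinearMap ∘ₗ N.subtype ∘ₗ e1.symm.toLinearMap with hD
  have key1 : (TensorProduct.congr e2 (LinearEquiv.refl ℤ K)).toLinearMap ∘ₗ (N.subtype.rTensor K)
      = (D.rTensor K) ∘ₗ (TensorProduct.congr e1 (LinearEquiv.refl ℤ K)).toLinearMap := by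
    apply TensorProduct.ext'
    intro x c
    simp [TensorProduct.congr_tmul, hD]
  have step1 := inj_conj (N.subtype.rTensor K) (D.rTensor K)
    (TensorProduct.congr e1 (LinearEquiv.refl ℤ K))
    (TensorProduct.congr e2 (LinearEquiv.refl ℤ K)) key1
  have hDapp : ∀ (x : Fin m → ℤ) (i : ι),
      D x i = ∑ j, (if snf.f j = i then snf.a j * x j else 0) := by
    intro x i
    simp only [hD, LinearMap.coe_comp, LinearEquiv.coe_coe, Function.comp_apply, he1, he2,
      Module.Basis.equivFun_symm_apply, Submodule.coe_subtype, AddSubmonoidClass.coe_finset_sum,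
      SetLike.val_smul, snf.snf, Module.Basis.equivFun_apply, map_sum, map_smul,
      Module.Basis.repr_self, Finsupp.coe_smul, Finsupp.coe_finset_sum, Finset.sum_apply,
      Pi.smul_apply, Finsupp.single_apply, smul_eq_mul, mul_ite, mul_zero]
    refine Finset.sum_congr rfl fun j _ => ?_
    by_cases h : snf.f j = i
    · simp only [if_pos h, if_pos h.symm]
      ring
    · simp only [if_neg h, if_neg (fun hh : i = snf.f j => h hh.symm)]
  set DK : (Fin m → K) →ₗ[K] (ι → K) :=
    LinearMap.pi (fun i => ∑ j, (if snf.f j = i then (snf.a j : K) else 0) • LinearMap.proj j)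
    with hDK
  have hDKapp : ∀ (v : Fin m → K) (i : ι),
      DK v i = ∑ j, (if snf.f j = i then (snf.a j : K) * v j else 0) := by
    intro v i
    simp only [hDK, LinearMap.pi_apply, LinearMap.coe_sum, Finset.sum_apply, ite_smul,
      zero_smul, LinearMap.zero_apply, LinearMap.smul_apply, LinearMap.proj_apply]
    refine Finset.sum_congr rfl fun j _ => ?_
    split_ifs with h <;> simp
  have key2 : (phiEq K ι).toLinearMap ∘ₗ (D.rTensor K)
      = (DK.restrictScalars ℤ) ∘ₗ (phiEq K (Fin m)).toLinearMap := by
    apply TensorProduct.ext'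
    intro x c
    show (phiEq K ι) ((D.rTensor K) (x ⊗ₜ c)) = (DK.restrictScalars ℤ) ((phiEq K (Fin m)) (x ⊗ₜ c))
    simp only [LinearMap.coe_comp, Function.comp_apply, LinearEquiv.coe_coe,
      LinearMap.rTensor_tmul, phiEq_tmul, LinearMap.coe_restrictScalars, LinearMap.id_coe, id_eq]
    funext i
    rw [hDKapp, hDapp, Finset.sum_smul]
    refine Finset.sum_congr rfl fun j _ => ?_
    split_ifs with h
    · rw [mul_smul, zsmul_eq_mul]
    · simp
  have step2 := inj_conj (D.rTensor K) (DK.restrictScalars ℤ) (phiEq K (Fin m)) (phiEq K ι) key2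
  rw [step1, step2]
  constructor
  · intro hinj j haj0
    have h1 : (DK.restrictScalars ℤ) (Pi.single j 1) = (DK.restrictScalars ℤ) 0 := by
      rw [map_zero]
      show DK (Pi.single j 1) = 0
      funext i
      rw [hDKapp]
      show _ = (0 : ι → K) i
      rw [Pi.zero_apply]
      apply Finset.sum_eq_zero
      intro j' _
      split_ifs with h
      · by_cases hj : j' = j
        · subst hj; simp [haj0]
        · simp [Pi.single_apply, hj]
      · rfl
    have h2 := hinj h1
    have h3 := congrFun h2 j
    simp [Pi.single_apply] at h3
  · intro hA v w hvw
    funext j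
    have hsum : ∀ u : Fin m → K,
        ∑ j', (if snf.f j' = snf.f j then (snf.a j' : K) * u j' else 0) = (snf.a j : K) * u j := by
      intro u
      rw [Finset.sum_eq_single j]
      · simp
      · intro j' _ hne
        rw [if_neg]
        exact fun heq => hne (snf.f.injective heq)
      · simp
    have hj := congrFun hvw (snf.f j)
    show v j = w j
    rw [show ((DK.restrictScalars ℤ) v) (snf.f j) = DK v (snf.f j) from rfl,
      show ((DK.restrictScalars ℤ) w) (snf.f j) = DK w (snf.f j) from rfl,
      hDKapp, hDKapp, hsum, hsum] at hj
    exact mul_left_cancel₀ (hA j) hj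
end C1


section Compare
variable {n : ℕ} {Vf Eb : Type} [Fintype Vf] [Fintype Eb] [DecidableEq Vf]
  (Ne : Eb → Submodule ℤ (Fin n → ℤ)) (K : Type) [Field K]

set_option synthInstance.maxHeartbeats 1000000 in
set_option maxHeartbeats 1000000 in
lemma comparison_bijective_iff
    (f : ((Vf → Fin n → ℤ) × ((e : Eb) → Ne e)) →ₗ[ℤ] (Eb → Fin n → ℤ))
    (hp : ∀ c, ((LinearMap.ker f).subtype.rTensor K) c ∈ LinearMap.ker (f.rTensor K)) :
    Function.Bijective
      (LinearMap.codRestrict (LinearMap.ker (f.rTensor K))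
        ((LinearMap.ker f).subtype.rTensor K) hp) ↔
      Function.Injective ((LinearMap.range f).subtype.rTensor K) := by
  classical
  set A := ((Vf → Fin n → ℤ) × ((e : Eb) → Ne e))
  set N := LinearMap.range f with hN
  set f' := f.rangeRestrict with hf'
  have hsub : N.subtype ∘ₗ f' = f := LinearMap.subtype_comp_codRestrict _ _ _
  obtain ⟨s, hs⟩ := Module.projective_lifting_property f' LinearMap.id f.surjective_rangeRestrict
  have hker0 : ∀ x : LinearMap.ker f, f' (x : A) = 0 := by
    intro x
    apply Subtype.ext
    show f (x : A) = 0
    exact x.2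
  let r : A →ₗ[ℤ] LinearMap.ker f :=
    LinearMap.codRestrict (LinearMap.ker f) (LinearMap.id - s ∘ₗ f') (by
      intro x
      simp only [LinearMap.mem_ker, LinearMap.sub_apply, LinearMap.id_apply, LinearMap.coe_comp,
        Function.comp_apply, map_sub]
      have h1 : f' (s (f' x)) = f' x := LinearMap.congr_fun hs (f' x)
      have : f (s (f' x)) = f x := by
        calc f (s (f' x)) = N.subtype (f' (s (f' x))) := (LinearMap.congr_fun hsub (s (f' x))).symm
          _ = N.subtype (f' x) := by rw [h1]
          _ = f x := LinearMap.congr_fun hsub x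
      rw [this, sub_self])
  have hrk : r ∘ₗ (LinearMap.ker f).subtype = LinearMap.id := by
    apply LinearMap.ext
    intro x
    apply Subtype.ext
    show ((x : A) - s (f' (x : A))) = (x : A)
    rw [hker0 x, map_zero, sub_zero]
  have hid : (LinearMap.ker f).subtype ∘ₗ r + s ∘ₗ f' = LinearMap.id := by
    apply LinearMap.ext
    intro x
    show ((x : A) - s (f' x)) + s (f' x) = x
    abel
  have hfk : f' ∘ₗ (LinearMap.ker f).subtype = 0 := by
    apply LinearMap.ext
    intro x
    simpa using hker0 x
  have hAkey : ∀ z, ((LinearMap.ker f).subtype.rTensor K) ((r.rTensor K) z)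
      + (s.rTensor K) ((f'.rTensor K) z) = z := by
    intro z
    have h1 : ((LinearMap.ker f).subtype.rTensor K) ∘ₗ (r.rTensor K)
        + (s.rTensor K) ∘ₗ (f'.rTensor K) = LinearMap.id := by
      rw [← LinearMap.rTensor_comp, ← LinearMap.rTensor_comp, ← LinearMap.rTensor_add, hid,
        LinearMap.rTensor_id]
    exact LinearMap.congr_fun h1 z
  constructor
  · intro hbij
    rw [← LinearMap.ker_eq_bot]
    rw [Submodule.eq_bot_iff]
    intro w hw
    rw [LinearMap.mem_ker] at hw
    obtain ⟨u, hu⟩ := LinearMap.rTensor_surjective K f.surjective_rangeRestrict w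
    have hfu : (f.rTensor K) u = 0 := by
      rw [← hsub, LinearMap.rTensor_comp, LinearMap.comp_apply, hu, hw]
    obtain ⟨z, hz⟩ := hbij.2 ⟨u, hfu⟩
    have hz' : ((LinearMap.ker f).subtype.rTensor K) z = u := congrArg Subtype.val hz
    rw [← hu, ← hz', ← LinearMap.comp_apply, ← LinearMap.rTensor_comp, hfk]
    simp
  · intro hinj
    constructor
    · intro x y hxy
      have hxy' : ((LinearMap.ker f).subtype.rTensor K) x
          = ((LinearMap.ker f).subtype.rTensor K) y := congrArg Subtype.val hxy
      have : (r.rTensor K) (((LinearMap.ker f).subtype.rTensor K) x)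
          = (r.rTensor K) (((LinearMap.ker f).subtype.rTensor K) y) := by rw [hxy']
      rwa [← LinearMap.comp_apply, ← LinearMap.comp_apply, ← LinearMap.rTensor_comp, hrk,
        LinearMap.rTensor_id, LinearMap.id_apply, LinearMap.id_apply] at this
    · rintro ⟨u, hu⟩
      rw [LinearMap.mem_ker] at hu
      have h1 : (N.subtype.rTensor K) ((f'.rTensor K) u) = 0 := by
        rw [← LinearMap.comp_apply, ← LinearMap.rTensor_comp, hsub, hu]
      have h2 : (f'.rTensor K) u = 0 := by
        apply hinj
        rw [h1, map_zero]
      refine ⟨r.rTensor K u, ?_⟩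
      apply Subtype.ext
      show ((LinearMap.ker f).subtype.rTensor K) ((r.rTensor K) u) = u
      have := hAkey u
      rwa [h2, map_zero, add_zero] at this
end Compare


/-- for a field `K`, the natural map `E¹(Γ) ⊗ K → E¹_K(Γ)` is an isomorphism
iff the order of the torsion part of `E²(Γ)` is prime to the characteristic of `K`. -/
theorem stmt3 {n : ℕ} {Vf Eb : Type} [Fintype Vf] [Fintype Eb] [DecidableEq Vf]
    (src tgt : Eb → Vf) (Ne : Eb → Submodule ℤ (Fin n → ℤ))
    (K : Type) [Field K] :
    Function.Bijective (kerComparison src tgt Ne K) ↔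
      (((Nat.card (Submodule.torsion ℤ
          ((Eb → Fin n → ℤ) ⧸ LinearMap.range (bMap src tgt Ne)))) : K) ≠ 0) := by
  classical
  have h1 : Function.Bijective (kerComparison src tgt Ne K) ↔
      Function.Injective ((LinearMap.range (bMap src tgt Ne)).subtype.rTensor K) :=
    comparison_bijective_iff Ne K (bMap src tgt Ne) _
  obtain ⟨m, snf⟩ := Submodule.smithNormalForm
    (Module.Free.chooseBasis ℤ (Eb → Fin n → ℤ)) (LinearMap.range (bMap src tgt Ne))
  have ha : ∀ j, snf.a j ≠ 0 := snf_a_ne_zero snf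
  rw [h1, inj_subtype_rTensor_iff K snf, card_torsion_quot_snf snf ha, Nat.cast_prod]
  constructor
  · intro h hzero
    obtain ⟨i, -, hi⟩ := Finset.prod_eq_zero_iff.mp hzero
    by_cases hex : ∃ j, snf.f j = i
    · rw [dif_pos hex] at hi
      exact h hex.choose ((natAbs_cast_eq_zero_iff _).mp hi)
    · rw [dif_neg hex] at hi
      rw [Nat.cast_one] at hi
      exact one_ne_zero hi
  · intro hcard0 j h0
    refine hcard0 (Finset.prod_eq_zero (Finset.mem_univ (snf.f j)) ?_)
    have hex : ∃ j', snf.f j' = snf.f j := ⟨j, rfl⟩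
    rw [dif_pos hex]
    have hch : hex.choose = j := snf.f.injective hex.choose_spec
    rw [hch]
    exact (natAbs_cast_eq_zero_iff _).mpr h0
end

section
/- The rank of an N_ℝ-parameterized tropical curve Γ satisfies rank(Γ) = (rank(N) - 3)·χ(Γ) + |E^∞(Γ)| - ov(Γ) + rank(E²(Γ)), where ov(Γ) = ∑_{v ∈ V^f(Γ)} (val(v) - 3) is the overvalency and χ(Γ) = |V^f(Γ)| - |E^b(Γ)| (using |E^∞(Γ)| = |V^∞(Γ)|). -/
open scoped Classical

/-- The valency of a finite vertex: incident bounded-edge endpoints (loops counted twice)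
plus incident unbounded edges. -/
noncomputable def valency {Vf Vinf Eb : Type} [Fintype Vinf] [Fintype Eb] [DecidableEq Vf]
    (src tgt : Eb → Vf) (att : Vinf → Vf) (v : Vf) : ℕ :=
  (Finset.univ.filter fun e => src e = v).card +
  (Finset.univ.filter fun e => tgt e = v).card +
  (Finset.univ.filter fun w => att w = v).card

/-- the rank formula
`rank(Γ) = (rank N - 3)·χ(Γ) + |E^∞(Γ)| - ov(Γ) + rank E²(Γ)`, where
`rank(Γ) = c(Γ) + rank E¹(Γ)`, `χ(Γ) = |V^f| - |E^b|`, `|E^∞| = |V^∞|`,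
`ov(Γ) = ∑_{v∈V^f} (val(v) - 3)`, and each slope lattice `N_e` has rank ≤ 1,
`c(Γ)` being the number of bounded edges with trivial slope. -/
theorem stmt6 {n : ℕ} {Vf Vinf Eb : Type} [Fintype Vf] [Fintype Vinf] [Fintype Eb]
    [DecidableEq Vf]
    (src tgt : Eb → Vf) (att : Vinf → Vf)
    (Ne : Eb → Submodule ℤ (Fin n → ℤ))
    (hrk : ∀ e, Module.finrank ℤ (Ne e) ≤ 1) :
    ((Finset.univ.filter fun e : Eb => Ne e = ⊥).card
        + Module.finrank ℤ (LinearMap.ker (bMap src tgt Ne)) : ℤ)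
      = ((n : ℤ) - 3) * ((Fintype.card Vf : ℤ) - Fintype.card Eb)
        + Fintype.card Vinf
        - (∑ v : Vf, ((valency src tgt att v : ℤ) - 3))
        + Module.finrank ℤ
            ((Eb → Fin n → ℤ) ⧸ LinearMap.range (bMap src tgt Ne)) := by
  set f := bMap src tgt Ne
  -- rank-nullity for the kernel
  have hdom : Module.finrank ℤ ((Vf → Fin n → ℤ) × ((e : Eb) → Ne e))
      = n * Fintype.card Vf + ∑ e, Module.finrank ℤ (Ne e) := by
    rw [Module.finrank_prod, Module.finrank_pi_fintype ℤ (M := fun e : Eb => Ne e)]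
    congr 1
    rw [Module.finrank_pi_fintype ℤ]
    simp [Module.finrank_pi, mul_comm]
  have h1 : Module.finrank ℤ (LinearMap.range f) + Module.finrank ℤ (LinearMap.ker f)
      = n * Fintype.card Vf + ∑ e, Module.finrank ℤ (Ne e) := by
    rw [← hdom, ← Submodule.finrank_quotient_add_finrank (LinearMap.ker f)]
    congr 1
    exact (f.quotKerEquivRange).finrank_eq.symm
  have h2 : Module.finrank ℤ ((Eb → Fin n → ℤ) ⧸ LinearMap.range f)
      + Module.finrank ℤ (LinearMap.range f) = n * Fintype.card Eb := by
    rw [Submodule.finrank_quotient_add_finrank]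
    rw [Module.finrank_pi_fintype ℤ]
    simp [Module.finrank_pi, mul_comm]
  -- sum of slope ranks
  have h3 : (∑ e, Module.finrank ℤ (Ne e))
      + (Finset.univ.filter fun e : Eb => Ne e = ⊥).card = Fintype.card Eb := by
    have key : (∑ e, Module.finrank ℤ (Ne e))
        = (Finset.univ.filter fun e : Eb => ¬ Ne e = ⊥).card := by
      rw [Finset.card_eq_sum_ones, Finset.sum_filter]
      refine Finset.sum_congr rfl fun e _ => ?_
      by_cases h : Ne e = ⊥
      · simp [h, Submodule.finrank_eq_zero.mpr h]
      · have h0 : Module.finrank ℤ (Ne e) ≠ 0 := fun hc => h (Submodule.finrank_eq_zero.mp hc)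
        have := hrk e
        rw [if_pos h]
        omega
    rw [key, add_comm]
    have := Finset.card_filter_add_card_filter_not
      (s := (Finset.univ : Finset Eb)) (p := fun e => Ne e = ⊥)
    simpa using this
  -- handshake
  have hsrc : (∑ v : Vf, (Finset.univ.filter fun e => src e = v).card) = Fintype.card Eb := by
    rw [← Finset.card_univ, Finset.card_eq_sum_card_fiberwise (f := src) (t := Finset.univ)
      (fun x _ => Finset.mem_univ _)]
  have htgt : (∑ v : Vf, (Finset.univ.filter fun e => tgt e = v).card) = Fintype.card Eb := by
    rw [← Finset.card_univ, Finset.card_eq_sum_card_fiberwise (f := tgt) (t := Finset.univ)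
      (fun x _ => Finset.mem_univ _)]
  have hatt : (∑ v : Vf, (Finset.univ.filter fun w => att w = v).card) = Fintype.card Vinf := by
    rw [← Finset.card_univ, Finset.card_eq_sum_card_fiberwise (f := att) (t := Finset.univ)
      (fun x _ => Finset.mem_univ _)]
  have h4 : (∑ v : Vf, valency src tgt att v)
      = 2 * Fintype.card Eb + Fintype.card Vinf := by
    simp only [valency, Finset.sum_add_distrib, hsrc, htgt, hatt]
    ring
  have h4' : (∑ v : Vf, (valency src tgt att v : ℤ))
      = 2 * Fintype.card Eb + Fintype.card Vinf := by exact_mod_cast congrArg (Nat.cast : ℕ → ℤ) h4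
  have h5 : (∑ v : Vf, ((valency src tgt att v : ℤ) - 3))
      = 2 * Fintype.card Eb + Fintype.card Vinf - 3 * Fintype.card Vf := by
    rw [Finset.sum_sub_distrib, h4']
    simp [Finset.sum_const, Finset.card_univ]
    ring
  rw [h5]
  have h1' : (Module.finrank ℤ (LinearMap.range f) : ℤ) + Module.finrank ℤ (LinearMap.ker f)
      = n * Fintype.card Vf + ∑ e, (Module.finrank ℤ (Ne e) : ℤ) := by exact_mod_cast h1
  have h2' : (Module.finrank ℤ ((Eb → Fin n → ℤ) ⧸ LinearMap.range f) : ℤ)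
      + Module.finrank ℤ (LinearMap.range f) = n * Fintype.card Eb := by exact_mod_cast h2
  have h3' : (∑ e, (Module.finrank ℤ (Ne e) : ℤ))
      + ((Finset.univ.filter fun e : Eb => Ne e = ⊥).card : ℤ) = Fintype.card Eb := by
    exact_mod_cast h3
  linarith [h1', h2', h3']
end

section
/- Let Γ be an N_ℝ-parameterized tropical curve and Γ₀ ⊂ Γ the maximal subgraph on the finite vertices whose edges are exactly the bounded edges with trivial slope. Let Γ̄ = Γ/Γ₀ be the curve obtained by contracting each connected component of Γ₀ to a single vertex. Then the natural map E¹_G(Γ̄) → E¹_G(Γ) is an isomorphism, and there is a short exact sequence 0 → E²_G(Γ̄) → E²_G(Γ) → N_G^{g(Γ)-g(Γ̄)} → 0. -/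
open TensorProduct
open scoped Classical

set_option linter.unusedSectionVars false
set_option linter.unusedVariables false
set_option maxHeartbeats 1000000

lemma bMap_apply {n : ℕ} {Vf Eb : Type} [Fintype Vf] [Fintype Eb] [DecidableEq Vf]
    (src tgt : Eb → Vf) (Ne : Eb → Submodule ℤ (Fin n → ℤ))
    (x : Vf → Fin n → ℤ) (y : (e : Eb) → Ne e) (e : Eb) :
    bMap src tgt Ne (x, y) e = x (tgt e) - x (src e) + (y e : Fin n → ℤ) := by
  simp only [bMap, LinearMap.pi_apply, LinearMap.add_apply, LinearMap.comp_apply,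
    LinearMap.fst_apply, LinearMap.snd_apply, LinearMap.proj_apply, Submodule.coe_subtype,
    LinearMap.sum_apply, LinearMap.smul_apply, eps, sub_smul, ite_smul, one_smul, zero_smul,
    Finset.sum_sub_distrib, Finset.sum_ite_eq, Finset.mem_univ, if_true, LinearMap.sub_apply]



section Abstract

variable {D Dbar C Cbar F H W : Type}
  [AddCommGroup D] [AddCommGroup Dbar] [AddCommGroup C] [AddCommGroup Cbar]
  [AddCommGroup F] [AddCommGroup H] [AddCommGroup W]
  [Module ℤ D] [Module ℤ Dbar] [Module ℤ C] [Module ℤ Cbar]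
  [Module ℤ F] [Module ℤ H] [Module ℤ W]

attribute [-instance] AddCommGroup.toIntModule in
theorem abstract_contr (b : D →ₗ[ℤ] C) (bb : Dbar →ₗ[ℤ] Cbar)
    (T : Dbar →ₗ[ℤ] D) (S : Cbar →ₗ[ℤ] C)
    (u : (Dbar × F) ≃ₗ[ℤ] D) (w : C ≃ₗ[ℤ] Cbar × F × H)
    (hu : ∀ z f, w (b (u (z, f))) = (bb z, f, 0))
    (hT : ∀ z, u (z, 0) = T z)
    (hS : ∀ c, w.symm (c, 0, 0) = S c)
    (G : Type) [AddCommGroup G] [Module ℤ G] (ι : (H ⊗[ℤ] G) ≃ₗ[ℤ] W) :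
    (∃ f : (LinearMap.ker (bb.rTensor G)) →ₗ[ℤ] (LinearMap.ker (b.rTensor G)),
      (∀ z, (f z : D ⊗[ℤ] G) = (T.rTensor G) z) ∧ Function.Bijective f) ∧
    (∃ (φ : (Cbar ⊗[ℤ] G ⧸ LinearMap.range (bb.rTensor G)) →ₗ[ℤ]
          (C ⊗[ℤ] G ⧸ LinearMap.range (b.rTensor G)))
       (ψ : (C ⊗[ℤ] G ⧸ LinearMap.range (b.rTensor G)) →ₗ[ℤ] W),
      (∀ x, φ (Submodule.Quotient.mk x) = Submodule.Quotient.mk ((S.rTensor G) x)) ∧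
      Function.Injective φ ∧
      LinearMap.range φ = LinearMap.ker ψ ∧
      Function.Surjective ψ) := by
  -- tensored equivalences
  let eD : (Dbar ⊗[ℤ] G × F ⊗[ℤ] G) ≃ₗ[ℤ] D ⊗[ℤ] G :=
    (@TensorProduct.prodLeft ℤ ℤ Dbar F G _ _ _ _ _ _ _ _ (@IsScalarTower.left ℤ Dbar _ Module.toDistribMulAction.toMulAction) _ _ _ (@IsScalarTower.left ℤ F _ Module.toDistribMulAction.toMulAction)).symm ≪≫ₗ TensorProduct.congr u (LinearEquiv.refl ℤ G)
  let eC : C ⊗[ℤ] G ≃ₗ[ℤ] Cbar ⊗[ℤ] G × (F ⊗[ℤ] G × H ⊗[ℤ] G) :=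
    TensorProduct.congr w (LinearEquiv.refl ℤ G) ≪≫ₗ (@TensorProduct.prodLeft ℤ ℤ Cbar (F × H) G _ _ _ _ _ _ _ _ (@IsScalarTower.left ℤ Cbar _ Module.toDistribMulAction.toMulAction) _ _ _ (@IsScalarTower.left ℤ (F × H) _ Module.toDistribMulAction.toMulAction))
      ≪≫ₗ (LinearEquiv.refl ℤ (Cbar ⊗[ℤ] G)).prodCongr (@TensorProduct.prodLeft ℤ ℤ F H G _ _ _ _ _ _ _ _ (@IsScalarTower.left ℤ F _ Module.toDistribMulAction.toMulAction) _ _ _ (@IsScalarTower.left ℤ H _ Module.toDistribMulAction.toMulAction))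
  -- key identities
  have keyD : ∀ z, eD (z, 0) = T.rTensor G z := by
    have : (eD.toLinearMap ∘ₗ LinearMap.inl ℤ (Dbar ⊗[ℤ] G) (F ⊗[ℤ] G)) = T.rTensor G := by
      apply TensorProduct.ext'
      intro z g
      have h0 : ((z ⊗ₜ[ℤ] g, (0 : F ⊗[ℤ] G)) : Dbar ⊗[ℤ] G × F ⊗[ℤ] G)
          = (z ⊗ₜ[ℤ] g, (0 : F) ⊗ₜ[ℤ] g) := by rw [TensorProduct.zero_tmul]
      simp only [LinearMap.comp_apply, LinearMap.inl_apply, LinearEquiv.coe_coe, eD,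
        LinearEquiv.trans_apply, h0, TensorProduct.prodLeft_symm_tmul,
        TensorProduct.congr_tmul, LinearEquiv.refl_apply, LinearMap.rTensor_tmul, hT]
    intro z
    have := LinearMap.congr_fun this z
    simpa using this
  have keyC : ∀ c, eC (S.rTensor G c) = (c, 0, 0) := by
    have : (eC.toLinearMap ∘ₗ S.rTensor G)
        = ((LinearMap.id).prod (LinearMap.prod 0 0) :
            Cbar ⊗[ℤ] G →ₗ[ℤ] Cbar ⊗[ℤ] G × (F ⊗[ℤ] G × H ⊗[ℤ] G)) := by
      apply TensorProduct.ext'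
      intro c g
      have hw : w (S c) = (c, 0, 0) := by rw [← hS c, LinearEquiv.apply_symm_apply]
      simp only [LinearMap.comp_apply, LinearMap.rTensor_tmul, LinearEquiv.coe_coe, eC,
        LinearEquiv.trans_apply, TensorProduct.congr_tmul, LinearEquiv.refl_apply, hw,
        TensorProduct.prodLeft_tmul, LinearEquiv.prodCongr_apply, LinearMap.id_apply,
        LinearMap.prod_apply, Pi.prod, Function.prod_apply, LinearMap.zero_apply, TensorProduct.zero_tmul,
        LinearMap.id_coe, id_eq]
    intro c
    have := LinearMap.congr_fun this c
    simpa [Pi.prod] using this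
  have key : ∀ x : Dbar ⊗[ℤ] G × F ⊗[ℤ] G,
      eC (b.rTensor G (eD x)) = (bb.rTensor G x.1, x.2, 0) := by
    have h1 : ∀ z : Dbar ⊗[ℤ] G, eC (b.rTensor G (eD (z, 0))) = (bb.rTensor G z, 0, 0) := by
      have : (eC.toLinearMap ∘ₗ b.rTensor G ∘ₗ eD.toLinearMap ∘ₗ
            LinearMap.inl ℤ (Dbar ⊗[ℤ] G) (F ⊗[ℤ] G))
          = ((bb.rTensor G).prod (LinearMap.prod 0 0)) := by
        apply TensorProduct.ext'
        intro z g
        have h0 : ((z ⊗ₜ[ℤ] g, (0 : F ⊗[ℤ] G)) : Dbar ⊗[ℤ] G × F ⊗[ℤ] G)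
            = (z ⊗ₜ[ℤ] g, (0 : F) ⊗ₜ[ℤ] g) := by rw [TensorProduct.zero_tmul]
        simp only [LinearMap.comp_apply, LinearMap.inl_apply, LinearEquiv.coe_coe, eD, eC,
          LinearEquiv.trans_apply, h0, TensorProduct.prodLeft_symm_tmul,
          TensorProduct.congr_tmul, LinearEquiv.refl_apply, LinearMap.rTensor_tmul, hu,
          TensorProduct.prodLeft_tmul, LinearEquiv.prodCongr_apply, LinearMap.prod_apply, Pi.prod, Function.prod_apply,
          LinearMap.zero_apply, TensorProduct.zero_tmul]
      intro z
      have := LinearMap.congr_fun this z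
      simpa [Pi.prod] using this
    have h2 : ∀ f : F ⊗[ℤ] G, eC (b.rTensor G (eD (0, f))) = (0, f, 0) := by
      have : (eC.toLinearMap ∘ₗ b.rTensor G ∘ₗ eD.toLinearMap ∘ₗ
            LinearMap.inr ℤ (Dbar ⊗[ℤ] G) (F ⊗[ℤ] G))
          = ((0 : F ⊗[ℤ] G →ₗ[ℤ] Cbar ⊗[ℤ] G).prod (LinearMap.prod LinearMap.id 0)) := by
        apply TensorProduct.ext'
        intro f g
        have h0 : (((0 : Dbar ⊗[ℤ] G), f ⊗ₜ[ℤ] g) : Dbar ⊗[ℤ] G × F ⊗[ℤ] G)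
            = ((0 : Dbar) ⊗ₜ[ℤ] g, f ⊗ₜ[ℤ] g) := by rw [TensorProduct.zero_tmul]
        have hu0 : w (b (u ((0 : Dbar), f))) = (0, f, 0) := by
          rw [hu]; simp
        simp only [LinearMap.comp_apply, LinearMap.inr_apply, LinearEquiv.coe_coe, eD, eC,
          LinearEquiv.trans_apply, h0, TensorProduct.prodLeft_symm_tmul,
          TensorProduct.congr_tmul, LinearEquiv.refl_apply, LinearMap.rTensor_tmul, hu0,
          TensorProduct.prodLeft_tmul, LinearEquiv.prodCongr_apply, LinearMap.prod_apply, Pi.prod, Function.prod_apply,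
          LinearMap.zero_apply, TensorProduct.zero_tmul, LinearMap.id_coe, id_eq]
      intro f
      have := LinearMap.congr_fun this f
      simpa [Pi.prod] using this
    intro x
    have hx : x = (x.1, 0) + (0, x.2) := by simp
    rw [hx, map_add, map_add, map_add, h1, h2]
    simp

  constructor
  · -- kernel part
    have hmem : ∀ x ∈ LinearMap.ker (bb.rTensor G),
        T.rTensor G x ∈ LinearMap.ker (b.rTensor G) := by
      intro x hx
      rw [LinearMap.mem_ker] at hx ⊢
      have h0 : eC (b.rTensor G (T.rTensor G x)) = 0 := by
        rw [← keyD x, key (x, 0)]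
        simp [hx]
      exact (LinearEquiv.map_eq_zero_iff eC).mp h0
    refine ⟨(T.rTensor G).restrict hmem, fun z => rfl, ?_, ?_⟩
    · intro a b hab
      have h1 : T.rTensor G (a : Dbar ⊗[ℤ] G) = T.rTensor G (b : Dbar ⊗[ℤ] G) :=
        congrArg Subtype.val hab
      rw [← keyD, ← keyD] at h1
      have := eD.injective h1
      exact Subtype.ext (congrArg Prod.fst this)
    · intro x
      have hp := key (eD.symm (x : D ⊗[ℤ] G))
      rw [eD.apply_symm_apply, LinearMap.mem_ker.mp x.2, map_zero] at hp
      have h1 : bb.rTensor G (eD.symm (x : D ⊗[ℤ] G)).1 = 0 := (Prod.mk.injEq _ _ _ _).mp hp.symm |>.1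
      have h2 : (eD.symm (x : D ⊗[ℤ] G)).2 = 0 := by
        have := (Prod.mk.injEq _ _ _ _).mp hp.symm |>.2
        exact ((Prod.mk.injEq _ _ _ _).mp this).1
      refine ⟨⟨(eD.symm (x : D ⊗[ℤ] G)).1, LinearMap.mem_ker.mpr h1⟩, ?_⟩
      apply Subtype.ext
      show T.rTensor G _ = _
      rw [← keyD, ← h2]
      exact eD.apply_symm_apply _
  · -- cokernel part
    have hrange : ∀ z : Dbar ⊗[ℤ] G,
        S.rTensor G (bb.rTensor G z) ∈ LinearMap.range (b.rTensor G) := by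
      intro z
      refine ⟨eD (z, 0), ?_⟩
      apply eC.injective
      rw [key (z, 0), keyC]
    let φ : (Cbar ⊗[ℤ] G ⧸ LinearMap.range (bb.rTensor G)) →ₗ[ℤ]
        (C ⊗[ℤ] G ⧸ LinearMap.range (b.rTensor G)) :=
      Submodule.liftQ _ ((LinearMap.range (b.rTensor G)).mkQ ∘ₗ S.rTensor G) (by
        rintro _ ⟨z, rfl⟩
        simp only [LinearMap.mem_ker, LinearMap.comp_apply, Submodule.mkQ_apply,
          Submodule.Quotient.mk_eq_zero]
        exact hrange z)
    let π3 : C ⊗[ℤ] G →ₗ[ℤ] H ⊗[ℤ] G :=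
      (LinearMap.snd ℤ (F ⊗[ℤ] G) (H ⊗[ℤ] G)) ∘ₗ
        (LinearMap.snd ℤ (Cbar ⊗[ℤ] G) (F ⊗[ℤ] G × H ⊗[ℤ] G)) ∘ₗ eC.toLinearMap
    have hπ3 : ∀ x, π3 x = (eC x).2.2 := fun x => rfl
    let ψ0 : (C ⊗[ℤ] G ⧸ LinearMap.range (b.rTensor G)) →ₗ[ℤ] H ⊗[ℤ] G :=
      Submodule.liftQ _ π3 (by
        rintro _ ⟨x, rfl⟩
        rw [LinearMap.mem_ker, hπ3]
        have hp := key (eD.symm x)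
        rw [eD.apply_symm_apply] at hp
        rw [hp])
    refine ⟨φ, ι.toLinearMap ∘ₗ ψ0, fun x => rfl, ?_, ?_, ?_⟩
    · -- injectivity of φ
      intro a b hab
      obtain ⟨x, rfl⟩ := Submodule.Quotient.mk_surjective _ a
      obtain ⟨y, rfl⟩ := Submodule.Quotient.mk_surjective _ b
      have h1 : S.rTensor G x - S.rTensor G y ∈ LinearMap.range (b.rTensor G) :=
        (Submodule.Quotient.eq _).mp hab
      obtain ⟨m, hm⟩ := h1
      have h2 : eC (S.rTensor G x - S.rTensor G y) = eC (b.rTensor G m) := by rw [hm]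
      rw [map_sub, keyC, keyC] at h2
      have hp := key (eD.symm m)
      rw [eD.apply_symm_apply] at hp
      rw [hp] at h2
      have hxy : x - y = bb.rTensor G (eD.symm m).1 := by
        have := congrArg Prod.fst h2
        simpa using this
      exact (Submodule.Quotient.eq _).mpr ⟨_, hxy.symm⟩
    · -- range φ = ker ψ
      ext t
      constructor
      · rintro ⟨a, rfl⟩
        obtain ⟨c, rfl⟩ := Submodule.Quotient.mk_surjective _ a
        rw [LinearMap.mem_ker]
        show ι (ψ0 (φ (Submodule.Quotient.mk c))) = 0
        have : φ (Submodule.Quotient.mk c) = Submodule.Quotient.mk (S.rTensor G c) := rfl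
        rw [this]
        have : ψ0 (Submodule.Quotient.mk (S.rTensor G c)) = π3 (S.rTensor G c) := rfl
        rw [this, hπ3, keyC]
        simp
      · intro ht
        obtain ⟨x, rfl⟩ := Submodule.Quotient.mk_surjective _ t
        rw [LinearMap.mem_ker] at ht
        have ht0 : (eC x).2.2 = 0 := by
          have : ι (π3 x) = 0 := ht
          rw [hπ3] at this
          exact (LinearEquiv.map_eq_zero_iff ι).mp this
        refine ⟨Submodule.Quotient.mk (eC x).1, ?_⟩
        show Submodule.Quotient.mk (S.rTensor G (eC x).1) = _
        apply (Submodule.Quotient.eq _).mpr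
        refine ⟨eD (0, -(eC x).2.1), ?_⟩
        apply eC.injective
        have hk := key (0, -(eC x).2.1)
        simp only [map_zero] at hk
        rw [hk, map_sub, keyC]
        have hx' : eC x = ((eC x).1, (eC x).2.1, (0 : H ⊗[ℤ] G)) := by rw [← ht0]
        rw [hx']
        simp [Prod.ext_iff]
    · -- surjectivity of ψ
      intro y
      refine ⟨Submodule.Quotient.mk (eC.symm (0, 0, ι.symm y)), ?_⟩
      show ι (ψ0 _) = y
      have : ψ0 (Submodule.Quotient.mk (eC.symm (0, 0, ι.symm y)))
          = π3 (eC.symm (0, 0, ι.symm y)) := rfl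
      rw [this, hπ3, eC.apply_symm_apply]
      exact ι.apply_symm_apply y

end Abstract

section Contraction

variable {n : ℕ} {Vf Vfbar Eb : Type}

/-- The cochain-level map `(x̄, ȳ) ↦ (x̄ ∘ q, extension of ȳ by zero)` from the contracted
curve `Γ̄ = Γ/Γ₀` to `Γ` (edges of `Γ̄` are the edges of `Γ` with nontrivial slope). -/
noncomputable def contrT (q : Vf → Vfbar) (Ne : Eb → Submodule ℤ (Fin n → ℤ)) :
    ((Vfbar → Fin n → ℤ) × ((e : {e : Eb // Ne e ≠ ⊥}) → Ne e.1)) →ₗ[ℤ]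
      ((Vf → Fin n → ℤ) × ((e : Eb) → Ne e)) :=
  LinearMap.prodMap (LinearMap.funLeft ℤ (Fin n → ℤ) q)
    (LinearMap.pi fun e =>
      if h : Ne e = ⊥ then 0
      else LinearMap.proj (⟨e, h⟩ : {e : Eb // Ne e ≠ ⊥}))

/-- Extension by zero on the target: `(⊕_{ē ∈ E^b(Γ̄)} N) → (⊕_{e ∈ E^b(Γ)} N)`. -/
noncomputable def contrS (Ne : Eb → Submodule ℤ (Fin n → ℤ)) :
    (({e : Eb // Ne e ≠ ⊥}) → Fin n → ℤ) →ₗ[ℤ] (Eb → Fin n → ℤ) :=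
  LinearMap.pi fun e =>
    if h : Ne e = ⊥ then 0
    else LinearMap.proj (⟨e, h⟩ : {e : Eb // Ne e ≠ ⊥})

end Contraction

section Chain

variable {n : ℕ} {Vf Vfbar Eb : Type} [Fintype Vf] [Fintype Vfbar] [Fintype Eb]
  [DecidableEq Vf] [DecidableEq Vfbar]

/-- coboundary map for a family of edges -/
noncomputable def dmap {E' : Type} (sr tg : E' → Vf) :
    (Vf → Fin n → ℤ) →ₗ[ℤ] (E' → Fin n → ℤ) :=
  LinearMap.pi fun e => (LinearMap.proj (tg e) : (Vf → Fin n → ℤ) →ₗ[ℤ] (Fin n → ℤ)) - LinearMap.proj (sr e)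

@[simp] lemma dmap_apply {E' : Type} (sr tg : E' → Vf) (x : Vf → Fin n → ℤ) (e : E') :
    dmap sr tg x e = x (tg e) - x (sr e) := rfl

variable (src tgt : Eb → Vf) (Ne : Eb → Submodule ℤ (Fin n → ℤ)) (q : Vf → Vfbar)
  (s : Vfbar → Vf)

/-- the complement of the "constant on fibers" functions -/
noncomputable def FF : Submodule ℤ (Vf → Fin n → ℤ) :=
  LinearMap.ker (LinearMap.funLeft ℤ (Fin n → ℤ) s)

lemma mem_FF (x : Vf → Fin n → ℤ) : x ∈ FF s ↔ ∀ w, x (s w) = 0 := by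
  constructor
  · intro h w
    exact congrFun h w
  · intro h
    funext w
    exact h w

/-- coboundary restricted to trivial-slope edges, on FF -/
noncomputable def deltaF : (FF s : Submodule ℤ (Vf → Fin n → ℤ)) →ₗ[ℤ]
    ({e : Eb // Ne e = ⊥} → Fin n → ℤ) :=
  (dmap (fun e : {e : Eb // Ne e = ⊥} => src e.1) (fun e => tgt e.1)) ∘ₗ (FF s).subtype

section WithHyps

variable (hqs : ∀ w, q (s w) = w)
  (hq1 : ∀ e, Ne e = ⊥ → q (src e) = q (tgt e))
  (hq2 : ∀ v w, q v = q w → Relation.ReflTransGen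
      (fun a b => ∃ e, Ne e = ⊥ ∧
        ((src e = a ∧ tgt e = b) ∨ (src e = b ∧ tgt e = a))) v w)

include hqs hq2 in
lemma eq_along (x : Vf → Fin n → ℤ)
    (hx : ∀ e, Ne e = ⊥ → x (tgt e) = x (src e)) (v : Vf) : x v = x (s (q v)) := by
  have key : ∀ a b : Vf, Relation.ReflTransGen
      (fun a b => ∃ e, Ne e = ⊥ ∧
        ((src e = a ∧ tgt e = b) ∨ (src e = b ∧ tgt e = a))) a b → x a = x b := by
    intro a b h
    induction h with
    | refl => rfl
    | tail hab hbc ih =>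
      rw [ih]
      obtain ⟨e, he, hc⟩ := hbc
      rcases hc with ⟨h1, h2⟩ | ⟨h1, h2⟩
      · rw [← h1, ← h2, hx e he]
      · rw [← h1, ← h2, hx e he]
  exact key v _ (hq2 v (s (q v)) (by rw [hqs]))

include hqs hq2 in
lemma dvd_along (k : ℤ) (x : Vf → Fin n → ℤ)
    (hx : ∀ e, Ne e = ⊥ → ∀ i, k ∣ x (tgt e) i - x (src e) i) (v : Vf) (i : Fin n) :
    k ∣ x v i - x (s (q v)) i := by
  have key : ∀ a b : Vf, Relation.ReflTransGen
      (fun a b => ∃ e, Ne e = ⊥ ∧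
        ((src e = a ∧ tgt e = b) ∨ (src e = b ∧ tgt e = a))) a b →
        k ∣ x a i - x b i := by
    intro a b h
    induction h with
    | refl => simp
    | @tail b c hab hbc ih =>
      obtain ⟨e, he, hc⟩ := hbc
      rcases hc with ⟨h1, h2⟩ | ⟨h1, h2⟩
      · have h3 := hx e he i
        rw [h1, h2] at h3
        have h4 : x a i - x c i = (x a i - x b i) + (x b i - x c i) := by ring
        rw [h4]
        exact dvd_add ih (dvd_sub_comm.mp h3)
      · have h3 := hx e he i
        rw [h1, h2] at h3
        have h4 : x a i - x c i = (x a i - x b i) + (x b i - x c i) := by ring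
        rw [h4]
        exact dvd_add ih h3
  exact key v _ (hq2 v (s (q v)) (by rw [hqs]))

include hqs hq2 in
lemma deltaF_injective : Function.Injective (deltaF src tgt Ne s) := by
  rw [← LinearMap.ker_eq_bot]
  rw [LinearMap.ker_eq_bot']
  intro f hf
  apply Subtype.ext
  funext v
  have h1 : ∀ e, Ne e = ⊥ → (f : Vf → Fin n → ℤ) (tgt e) = (f : Vf → Fin n → ℤ) (src e) := by
    intro e he
    have := congrFun hf ⟨e, he⟩
    simpa [deltaF, sub_eq_zero] using this
  have := eq_along src tgt Ne q s hqs hq2 (f : Vf → Fin n → ℤ) h1 v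
  rw [this, (mem_FF s _).mp f.2]
  rfl

end WithHyps

end Chain

section UV

variable {n : ℕ} {Vf Vfbar : Type} [Fintype Vf] [Fintype Vfbar]
  (q : Vf → Vfbar) (s : Vfbar → Vf) (hqs : ∀ w, q (s w) = w)

/-- decomposition of vertex cochains -/
noncomputable def uV : ((Vfbar → Fin n → ℤ) × (FF s : Submodule ℤ (Vf → Fin n → ℤ)))
    ≃ₗ[ℤ] (Vf → Fin n → ℤ) where
  toFun p := p.1 ∘ q + (p.2 : Vf → Fin n → ℤ)
  map_add' p p' := by
    funext v
    simp [Function.comp]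
    abel
  map_smul' k p := by
    funext v
    simp [Function.comp]
  invFun x := (x ∘ s, ⟨x - (x ∘ s) ∘ q, by
    rw [mem_FF]
    intro w
    simp [Function.comp, hqs w]⟩)
  left_inv p := by
    obtain ⟨xb, f⟩ := p
    have hfs : ∀ w, (f : Vf → Fin n → ℤ) (s w) = 0 := (mem_FF s _).mp f.2
    have h1 : (xb ∘ q + (f : Vf → Fin n → ℤ)) ∘ s = xb := by
      funext w
      simp [Function.comp, hqs w, hfs w]
    refine Prod.ext ?_ (Subtype.ext ?_)
    · exact h1
    · show (xb ∘ q + (f : Vf → Fin n → ℤ)) - ((xb ∘ q + (f : Vf → Fin n → ℤ)) ∘ s) ∘ q = _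
      rw [h1]
      funext v
      simp
  right_inv x := by
    funext v
    simp

@[simp] lemma uV_apply (p) : uV q s hqs p = p.1 ∘ q + (p.2 : Vf → Fin n → ℤ) := rfl

end UV

section W0

variable {n : ℕ} {Vf Vfbar Eb : Type} [Fintype Vf] [Fintype Vfbar] [Fintype Eb]
  [DecidableEq Vf] [DecidableEq Vfbar]
  (src tgt : Eb → Vf) (Ne : Eb → Submodule ℤ (Fin n → ℤ)) (q : Vf → Vfbar)
  (s : Vfbar → Vf)

lemma exists_w0 (hqs : ∀ w, q (s w) = w)
    (hq1 : ∀ e, Ne e = ⊥ → q (src e) = q (tgt e))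
    (hq2 : ∀ v w, q v = q w → Relation.ReflTransGen
      (fun a b => ∃ e, Ne e = ⊥ ∧
        ((src e = a ∧ tgt e = b) ∨ (src e = b ∧ tgt e = a))) v w)
    (d : ℕ)
    (hd : (d : ℤ) = ((Fintype.card Eb : ℤ) - Fintype.card {e : Eb // Ne e ≠ ⊥})
        - ((Fintype.card Vf : ℤ) - Fintype.card Vfbar)) :
    ∃ w0 : ({e : Eb // Ne e = ⊥} → Fin n → ℤ) ≃ₗ[ℤ]
        (↥(FF (n := n) s) × (Fin d → Fin n → ℤ)),
      ∀ f : ↥(FF (n := n) s),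
        w0 (deltaF src tgt Ne s f) = (f, 0) := by
  classical
  set M := Fin n → ℤ with hM
  set δF := deltaF src tgt Ne s with hδF
  set R := LinearMap.range δF with hR
  -- torsion-freeness of the quotient
  haveI hnz : NoZeroSMulDivisors ℤ (({e : Eb // Ne e = ⊥} → M) ⧸ R) := by
    refine ⟨fun {k t} hkt => ?_⟩
    by_cases hk : k = 0
    · exact Or.inl hk
    · right
      obtain ⟨a, rfl⟩ := Submodule.Quotient.mk_surjective _ t
      rw [← Submodule.Quotient.mk_smul, Submodule.Quotient.mk_eq_zero] at hkt
      obtain ⟨f, hf⟩ := hkt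
      -- divisibility of f by k
      have hdvd : ∀ v i, k ∣ (f : Vf → M) v i := by
        intro v i
        have hx : ∀ e, Ne e = ⊥ → ∀ i, k ∣ (f : Vf → M) (tgt e) i - (f : Vf → M) (src e) i := by
          intro e he i
          have := congrFun (congrFun hf ⟨e, he⟩) i
          simp only [hδF, deltaF, LinearMap.comp_apply, Submodule.coe_subtype,
            dmap_apply] at this
          exact ⟨a ⟨e, he⟩ i, by
            exact this⟩
        have h1 := dvd_along src tgt Ne q s hqs hq2 k (f : Vf → M) hx v i
        have h2 : (f : Vf → M) (s (q v)) = 0 := (mem_FF s _).mp f.2 _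
        rw [h2] at h1
        simpa using h1
      set f' : Vf → M := fun v i => (f : Vf → M) v i / k with hf'
      have hkf' : (k : ℤ) • f' = (f : Vf → M) := by
        funext v i
        simp only [Pi.smul_apply, smul_eq_mul, hf']
        exact Int.mul_ediv_cancel' (hdvd v i)
      have hf'F : f' ∈ FF s := by
        rw [mem_FF]
        intro w
        funext i
        have : (f : Vf → M) (s w) = 0 := (mem_FF s _).mp f.2 w
        simp [hf', this]
      rw [Submodule.Quotient.mk_eq_zero]
      refine ⟨⟨f', hf'F⟩, ?_⟩
      have h3 : k • δF ⟨f', hf'F⟩ = k • a := by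
        rw [← map_smul]
        have h4 : k • (⟨f', hf'F⟩ : (FF s : Submodule ℤ (Vf → M))) = f :=
          Subtype.ext hkf'
        rw [h4, hf]
      exact smul_right_injective ({e : Eb // Ne e = ⊥} → M) hk h3
  -- instances
  haveI hQfin : Module.Finite ℤ (({e : Eb // Ne e = ⊥} → M) ⧸ R) :=
    Module.Finite.of_surjective R.mkQ (Submodule.mkQ_surjective R)
  haveI hQfree : Module.Free ℤ (({e : Eb // Ne e = ⊥} → M) ⧸ R) :=
    Module.free_of_finite_type_torsion_free'
  haveI hFfin : Module.Finite ℤ (FF s : Submodule ℤ (Vf → M)) :=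
    Module.Finite.iff_fg.mpr (IsNoetherian.noetherian _)
  haveI hFfree : Module.Free ℤ (FF s : Submodule ℤ (Vf → M)) :=
    Module.free_of_finite_type_torsion_free'
  -- section of the quotient map
  obtain ⟨σ, hσ⟩ := LinearMap.exists_rightInverse_of_surjective R.mkQ
    (Submodule.range_mkQ R)
  have hσ' : ∀ t, R.mkQ (σ t) = t := fun t => LinearMap.congr_fun hσ t
  -- the basic splitting
  have hinj : Function.Injective δF := deltaF_injective src tgt Ne q s hqs hq2
  let eR : (FF s : Submodule ℤ (Vf → M)) ≃ₗ[ℤ] R := LinearEquiv.ofInjective δF hinj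
  have heR : ∀ f, (eR f : {e : Eb // Ne e = ⊥} → M) = δF f := fun f => rfl
  have hL1 : ∀ a : {e : Eb // Ne e = ⊥} → M, a - σ (R.mkQ a) ∈ R := by
    intro a
    rw [← Submodule.Quotient.mk_eq_zero R, ← Submodule.mkQ_apply, map_sub, hσ', sub_self]
  let L1 : ({e : Eb // Ne e = ⊥} → M) →ₗ[ℤ] R :=
    LinearMap.codRestrict R (LinearMap.id - σ ∘ₗ R.mkQ) hL1
  let toL : ({e : Eb // Ne e = ⊥} → M) →ₗ[ℤ]
      (↥(FF (n := n) s) × (({e : Eb // Ne e = ⊥} → M) ⧸ R)) :=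
    LinearMap.prod (eR.symm.toLinearMap ∘ₗ L1) R.mkQ
  let invL : (↥(FF (n := n) s) × (({e : Eb // Ne e = ⊥} → M) ⧸ R)) →ₗ[ℤ]
      ({e : Eb // Ne e = ⊥} → M) :=
    (δF ∘ₗ LinearMap.fst ℤ _ _) + (σ ∘ₗ LinearMap.snd ℤ _ _)
  have h_ti : ∀ p, toL (invL p) = p := by
    rintro ⟨f, t⟩
    have hv : invL (f, t) = δF f + σ t := rfl
    have hmk : R.mkQ (δF f + σ t) = t := by
      rw [map_add, hσ']
      have : R.mkQ (δF f) = 0 := by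
        rw [← LinearMap.mem_ker, Submodule.ker_mkQ]
        exact ⟨f, rfl⟩
      rw [this, zero_add]
    refine Prod.ext ?_ ?_
    · show eR.symm (L1 (invL (f, t))) = f
      rw [LinearEquiv.symm_apply_eq]
      apply Subtype.ext
      have hc1 : (L1 (invL (f, t)) : {e : Eb // Ne e = ⊥} → M)
          = invL (f, t) - σ (R.mkQ (invL (f, t))) := rfl
      rw [heR, hc1, hv, hmk]
      abel
    · show R.mkQ (invL (f, t)) = t
      rw [hv]; exact hmk
  have h_it : ∀ a, invL (toL a) = a := by
    intro a
    show δF (eR.symm (L1 a)) + σ (R.mkQ a) = a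
    have : δF (eR.symm (L1 a)) = (L1 a : {e : Eb // Ne e = ⊥} → M) := by
      rw [← heR, LinearEquiv.apply_symm_apply]
    have hc1 : (L1 a : {e : Eb // Ne e = ⊥} → M) = a - σ (R.mkQ a) := rfl
    rw [this, hc1]
    abel
  let w0' : ({e : Eb // Ne e = ⊥} → M) ≃ₗ[ℤ]
      (↥(FF (n := n) s) × (({e : Eb // Ne e = ⊥} → M) ⧸ R)) :=
    LinearEquiv.ofLinear toL invL (LinearMap.ext h_ti) (LinearMap.ext h_it)
  have hw0' : ∀ f : (FF s : Submodule ℤ (Vf → M)), w0' (δF f) = (f, 0) := by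
    intro f
    have hmk0 : R.mkQ (δF f) = 0 := by
      rw [← LinearMap.mem_ker, Submodule.ker_mkQ]
      exact ⟨f, rfl⟩
    refine Prod.ext ?_ ?_
    · show eR.symm (L1 (δF f)) = f
      rw [LinearEquiv.symm_apply_eq]
      apply Subtype.ext
      have hc1 : (L1 (δF f) : {e : Eb // Ne e = ⊥} → M)
          = δF f - σ (R.mkQ (δF f)) := rfl
      rw [heR, hc1, hmk0, map_zero, sub_zero]
    · exact hmk0
  -- rank computation
  have hMfr : Module.finrank ℤ M = n := by
    show Module.finrank ℤ (Fin n → ℤ) = n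
    simp [Module.finrank_fintype_fun_eq_card]
  have hpi : ∀ (V : Type) [Fintype V], Module.finrank ℤ (V → M) = Fintype.card V * n := by
    intro V _
    rw [Module.finrank_pi_fintype, Finset.sum_const, Finset.card_univ, hMfr, smul_eq_mul]
  have h1 : Fintype.card Vf * n
      = Fintype.card Vfbar * n + Module.finrank ℤ (FF s : Submodule ℤ (Vf → M)) := by
    have := LinearEquiv.finrank_eq (uV q s hqs (n := n))
    rw [Module.finrank_prod, hpi Vf, hpi Vfbar] at this
    omega
  have h2 : Fintype.card {e : Eb // Ne e = ⊥} * n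
      = Module.finrank ℤ (FF s : Submodule ℤ (Vf → M))
        + Module.finrank ℤ (({e : Eb // Ne e = ⊥} → M) ⧸ R) := by
    have := LinearEquiv.finrank_eq w0'
    rw [Module.finrank_prod, hpi {e : Eb // Ne e = ⊥}] at this
    omega
  have hc : Fintype.card {e : Eb // Ne e ≠ ⊥} + Fintype.card {e : Eb // Ne e = ⊥}
      = Fintype.card Eb := by
    have h3 := Fintype.card_subtype_compl (fun e : Eb => Ne e = ⊥)
    have h4 : Fintype.card {e : Eb // ¬ Ne e = ⊥} = Fintype.card {e : Eb // Ne e ≠ ⊥} := rfl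
    have h5 := Fintype.card_subtype_le (fun e : Eb => Ne e = ⊥)
    omega
  have hQr : Module.finrank ℤ (({e : Eb // Ne e = ⊥} → M) ⧸ R) = d * n := by
    have hZ : (Module.finrank ℤ (({e : Eb // Ne e = ⊥} → M) ⧸ R) : ℤ) = (d : ℤ) * n := by
      have h1' : (Fintype.card Vf : ℤ) * n = (Fintype.card Vfbar : ℤ) * n
          + (Module.finrank ℤ (FF s : Submodule ℤ (Vf → M)) : ℤ) := by exact_mod_cast h1
      have h2' : (Fintype.card {e : Eb // Ne e = ⊥} : ℤ) * n
          = (Module.finrank ℤ (FF s : Submodule ℤ (Vf → M)) : ℤ)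
            + (Module.finrank ℤ (({e : Eb // Ne e = ⊥} → M) ⧸ R) : ℤ) := by exact_mod_cast h2
      have hc' : (Fintype.card {e : Eb // Ne e ≠ ⊥} : ℤ)
          + (Fintype.card {e : Eb // Ne e = ⊥} : ℤ) = (Fintype.card Eb : ℤ) := by
        exact_mod_cast hc
      linear_combination -h2' + h1' + (n : ℤ) * hc' - (n : ℤ) * hd
    exact_mod_cast hZ
  -- identify the quotient with `Fin d → M`
  let B := Module.Free.chooseBasis ℤ (({e : Eb // Ne e = ⊥} → M) ⧸ R)
  let Btarget : Module.Basis ((_ : Fin d) × Fin n) ℤ (Fin d → M) :=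
    Pi.basis (fun _ : Fin d => Pi.basisFun ℤ (Fin n))
  have hcardB : Fintype.card
      (Module.Free.ChooseBasisIndex ℤ (({e : Eb // Ne e = ⊥} → M) ⧸ R))
      = Fintype.card ((_ : Fin d) × Fin n) := by
    rw [← Module.finrank_eq_card_chooseBasisIndex, hQr]
    simp [Fintype.card_sigma]
  let eQ : (({e : Eb // Ne e = ⊥} → M) ⧸ R) ≃ₗ[ℤ] (Fin d → M) :=
    B.equiv Btarget (Fintype.equivOfCardEq hcardB)
  refine ⟨w0'.trans ((LinearEquiv.refl ℤ _).prodCongr eQ), fun f => ?_⟩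
  rw [LinearEquiv.trans_apply, hw0']
  simp

end W0

section FullEquivs

variable {n : ℕ} {Vf Vfbar Eb : Type} [Fintype Vf] [Fintype Vfbar] [Fintype Eb]
  [DecidableEq Vf] [DecidableEq Vfbar]
  (src tgt : Eb → Vf) (Ne : Eb → Submodule ℤ (Fin n → ℤ)) (q : Vf → Vfbar)
  (s : Vfbar → Vf)

/-- extension by zero on the `y`-components -/
noncomputable def uB : ((e : {e : Eb // Ne e ≠ ⊥}) → Ne e.1) ≃ₗ[ℤ] ((e : Eb) → Ne e) where
  toFun y := fun e => if h : Ne e = ⊥ then 0 else y ⟨e, h⟩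
  map_add' y y' := by
    funext e
    by_cases h : Ne e = ⊥ <;> simp [h]
  map_smul' k y := by
    funext e
    by_cases h : Ne e = ⊥ <;> simp [h]
  invFun y := fun e => y e.1
  left_inv y := by
    funext e
    show (if h : Ne (e : Eb) = ⊥ then 0 else y ⟨(e : Eb), h⟩) = y e
    rw [dif_neg e.2]
  right_inv y := by
    funext e
    show (if h : Ne e = ⊥ then (0 : Ne e) else y e) = y e
    by_cases h : Ne e = ⊥
    · rw [dif_pos h]
      apply Subtype.ext
      have h2 : ∀ z : Fin n → ℤ, z ∈ Ne e → z = 0 := by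
        rw [h]
        intro z hz
        simpa using hz
      exact (h2 _ (y e).2).symm
    · rw [dif_neg h]

/-- the full decomposition of the domain -/
noncomputable def uFull (hqs : ∀ w, q (s w) = w) :
    (((Vfbar → Fin n → ℤ) × ((e : {e : Eb // Ne e ≠ ⊥}) → Ne e.1)) × ↥(FF (n := n) s))
      ≃ₗ[ℤ] ((Vf → Fin n → ℤ) × ((e : Eb) → Ne e)) where
  toFun p := (uV q s hqs (p.1.1, p.2), uB Ne p.1.2)
  map_add' p p' := by
    refine Prod.ext ?_ ?_
    · show uV q s hqs ((p + p').1.1, (p + p').2) = _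
      rw [show ((p + p').1.1, (p + p').2) = (p.1.1, p.2) + (p'.1.1, p'.2) from rfl, map_add]
      rfl
    · show uB Ne (p.1.2 + p'.1.2) = _
      rw [map_add]
      rfl
  map_smul' k p := by
    refine Prod.ext ?_ ?_
    · show uV q s hqs ((k • p).1.1, (k • p).2) = _
      rw [show ((k • p).1.1, (k • p).2) = k • (p.1.1, p.2) from rfl, map_smul]
      rfl
    · show uB Ne (k • p.1.2) = _
      rw [map_smul]
      rfl
  invFun x := ((((uV q s hqs).symm x.1).1, (uB Ne).symm x.2), ((uV q s hqs).symm x.1).2)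
  left_inv p := by
    have h1 : (uV q s hqs).symm (uV q s hqs (p.1.1, p.2)) = (p.1.1, p.2) :=
      (uV q s hqs).symm_apply_apply _
    have h2 : (uB Ne).symm (uB Ne p.1.2) = p.1.2 := (uB Ne).symm_apply_apply _
    refine Prod.ext (Prod.ext ?_ ?_) ?_
    · show ((uV q s hqs).symm (uV q s hqs (p.1.1, p.2))).1 = p.1.1
      rw [h1]
    · exact h2
    · show ((uV q s hqs).symm (uV q s hqs (p.1.1, p.2))).2 = p.2
      rw [h1]
  right_inv x := by
    refine Prod.ext ?_ ?_
    · show uV q s hqs ((((uV q s hqs).symm x.1).1, ((uV q s hqs).symm x.1).2)) = x.1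
      exact (uV q s hqs).apply_symm_apply x.1
    · exact (uB Ne).apply_symm_apply x.2

end FullEquivs

section WFull

variable {n d : ℕ} {Vf Vfbar Eb : Type} [Fintype Vf] [Fintype Vfbar] [Fintype Eb]
  [DecidableEq Vf] [DecidableEq Vfbar]
  (src tgt : Eb → Vf) (Ne : Eb → Submodule ℤ (Fin n → ℤ)) (q : Vf → Vfbar)
  (s : Vfbar → Vf)
  (w0 : ({e : Eb // Ne e = ⊥} → Fin n → ℤ) ≃ₗ[ℤ] (↥(FF (n := n) s) × (Fin d → Fin n → ℤ)))

/-- restriction to the trivial-slope edges -/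
noncomputable def restr0 : (Eb → Fin n → ℤ) →ₗ[ℤ] ({e : Eb // Ne e = ⊥} → Fin n → ℤ) :=
  LinearMap.funLeft ℤ (Fin n → ℤ) (fun e => e.1)

/-- restriction to the nontrivial-slope edges -/
noncomputable def restr1 : (Eb → Fin n → ℤ) →ₗ[ℤ] ({e : Eb // Ne e ≠ ⊥} → Fin n → ℤ) :=
  LinearMap.funLeft ℤ (Fin n → ℤ) (fun e => e.1)

/-- coboundary on nontrivial edges -/
noncomputable def delta1 : (Vf → Fin n → ℤ) →ₗ[ℤ] ({e : Eb // Ne e ≠ ⊥} → Fin n → ℤ) :=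
  dmap (fun e : {e : Eb // Ne e ≠ ⊥} => src e.1) (fun e => tgt e.1)

/-- forward map of the codomain decomposition -/
noncomputable def wToL :
    (Eb → Fin n → ℤ) →ₗ[ℤ]
      (({e : Eb // Ne e ≠ ⊥} → Fin n → ℤ) × (↥(FF (n := n) s) × (Fin d → Fin n → ℤ))) :=
  LinearMap.prod
    (restr1 Ne - (delta1 src tgt Ne) ∘ₗ (FF s).subtype ∘ₗ
      (LinearMap.fst ℤ _ _) ∘ₗ w0.toLinearMap ∘ₗ restr0 Ne)
    (w0.toLinearMap ∘ₗ restr0 Ne)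

/-- backward map of the codomain decomposition -/
noncomputable def wInvL :
    (({e : Eb // Ne e ≠ ⊥} → Fin n → ℤ) × (↥(FF (n := n) s) × (Fin d → Fin n → ℤ)))
      →ₗ[ℤ] (Eb → Fin n → ℤ) :=
  LinearMap.pi fun e =>
    if h : Ne e = ⊥ then
      (LinearMap.proj (⟨e, h⟩ : {e : Eb // Ne e = ⊥})) ∘ₗ w0.symm.toLinearMap ∘ₗ
        (LinearMap.snd ℤ _ _)
    else
      (LinearMap.proj (⟨e, h⟩ : {e : Eb // Ne e ≠ ⊥})) ∘ₗ ((LinearMap.fst ℤ _ _) +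
        (delta1 src tgt Ne) ∘ₗ (FF s).subtype ∘ₗ (LinearMap.fst ℤ _ _) ∘ₗ (LinearMap.snd ℤ _ _))

lemma wToL_apply (c : Eb → Fin n → ℤ) :
    wToL src tgt Ne s w0 c
      = (restr1 Ne c - delta1 src tgt Ne ((w0 (restr0 Ne c)).1 : Vf → Fin n → ℤ),
          w0 (restr0 Ne c)) := rfl

lemma wInvL_apply (p : ({e : Eb // Ne e ≠ ⊥} → Fin n → ℤ)
      × (↥(FF (n := n) s) × (Fin d → Fin n → ℤ))) (e : Eb) :
    wInvL src tgt Ne s w0 p e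
      = if h : Ne e = ⊥ then (w0.symm p.2) ⟨e, h⟩
        else (p.1 + delta1 src tgt Ne ((p.2.1 : ↥(FF (n := n) s)) : Vf → Fin n → ℤ)) ⟨e, h⟩ := by
  have h0 : wInvL src tgt Ne s w0 p e
      = (if h : Ne e = ⊥ then
          (LinearMap.proj (R := ℤ) (φ := fun _ => Fin n → ℤ) (⟨e, h⟩ : {e : Eb // Ne e = ⊥})) ∘ₗ w0.symm.toLinearMap ∘ₗ
            (LinearMap.snd ℤ ({e : Eb // Ne e ≠ ⊥} → Fin n → ℤ)
              (↥(FF (n := n) s) × (Fin d → Fin n → ℤ)))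
        else
          (LinearMap.proj (R := ℤ) (φ := fun _ => Fin n → ℤ) (⟨e, h⟩ : {e : Eb // Ne e ≠ ⊥})) ∘ₗ
            ((LinearMap.fst ℤ ({e : Eb // Ne e ≠ ⊥} → Fin n → ℤ)
                (↥(FF (n := n) s) × (Fin d → Fin n → ℤ))) +
              (delta1 src tgt Ne) ∘ₗ (FF s).subtype ∘ₗ
                (LinearMap.fst ℤ (↥(FF (n := n) s)) (Fin d → Fin n → ℤ)) ∘ₗ
                (LinearMap.snd ℤ ({e : Eb // Ne e ≠ ⊥} → Fin n → ℤ)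
                  (↥(FF (n := n) s) × (Fin d → Fin n → ℤ))))) p := rfl
  rw [h0]
  by_cases h : Ne e = ⊥
  · rw [dif_pos h, dif_pos h]
    rfl
  · rw [dif_neg h, dif_neg h]
    rfl

lemma w_restr0_inv (p : ({e : Eb // Ne e ≠ ⊥} → Fin n → ℤ)
      × (↥(FF (n := n) s) × (Fin d → Fin n → ℤ))) :
    restr0 Ne (wInvL src tgt Ne s w0 p) = w0.symm p.2 := by
  funext e
  have h1 : restr0 Ne (wInvL src tgt Ne s w0 p) e = wInvL src tgt Ne s w0 p e.1 := rfl
  rw [h1, wInvL_apply, dif_pos e.2]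

lemma w_restr1_inv (p : ({e : Eb // Ne e ≠ ⊥} → Fin n → ℤ)
      × (↥(FF (n := n) s) × (Fin d → Fin n → ℤ))) :
    restr1 Ne (wInvL src tgt Ne s w0 p)
      = p.1 + delta1 src tgt Ne ((p.2.1 : ↥(FF (n := n) s)) : Vf → Fin n → ℤ) := by
  funext e
  have h1 : restr1 Ne (wInvL src tgt Ne s w0 p) e = wInvL src tgt Ne s w0 p e.1 := rfl
  rw [h1, wInvL_apply, dif_neg e.2]

/-- the full decomposition of the codomain -/
noncomputable def wFull :
    (Eb → Fin n → ℤ) ≃ₗ[ℤ]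
      (({e : Eb // Ne e ≠ ⊥} → Fin n → ℤ) × (↥(FF (n := n) s) × (Fin d → Fin n → ℤ))) :=
  LinearEquiv.ofLinear (wToL src tgt Ne s w0) (wInvL src tgt Ne s w0)
    (by
      apply LinearMap.ext
      intro p
      rw [LinearMap.comp_apply, LinearMap.id_apply, wToL_apply, w_restr0_inv, w_restr1_inv,
        w0.apply_symm_apply]
      refine Prod.ext ?_ rfl
      show p.1 + delta1 src tgt Ne _ - delta1 src tgt Ne _ = p.1
      abel)
    (by
      apply LinearMap.ext
      intro c
      rw [LinearMap.comp_apply, LinearMap.id_apply]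
      funext e
      rw [wInvL_apply]
      by_cases h : Ne e = ⊥
      · rw [dif_pos h, wToL_apply]
        show (w0.symm (w0 (restr0 Ne c))) ⟨e, h⟩ = c e
        rw [w0.symm_apply_apply]
        rfl
      · rw [dif_neg h, wToL_apply]
        show ((restr1 Ne c - delta1 src tgt Ne _) + delta1 src tgt Ne _) ⟨e, h⟩ = c e
        rw [sub_add_cancel]
        rfl)

lemma wFull_apply (c : Eb → Fin n → ℤ) :
    wFull src tgt Ne s w0 c
      = (restr1 Ne c - delta1 src tgt Ne ((w0 (restr0 Ne c)).1 : Vf → Fin n → ℤ),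
          w0 (restr0 Ne c)) := rfl

lemma wFull_symm_apply (p) (e : Eb) :
    (wFull src tgt Ne s w0).symm p e
      = if h : Ne e = ⊥ then (w0.symm p.2) ⟨e, h⟩
        else (p.1 + delta1 src tgt Ne ((p.2.1 : ↥(FF (n := n) s)) : Vf → Fin n → ℤ)) ⟨e, h⟩ :=
  wInvL_apply src tgt Ne s w0 p e

end WFull

section Compat

variable {n d : ℕ} {Vf Vfbar Eb : Type} [Fintype Vf] [Fintype Vfbar] [Fintype Eb]
  [DecidableEq Vf] [DecidableEq Vfbar]
  (src tgt : Eb → Vf) (Ne : Eb → Submodule ℤ (Fin n → ℤ)) (q : Vf → Vfbar)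
  (s : Vfbar → Vf)
  (w0 : ({e : Eb // Ne e = ⊥} → Fin n → ℤ) ≃ₗ[ℤ] (↥(FF (n := n) s) × (Fin d → Fin n → ℤ)))

lemma contrT_apply (z : (Vfbar → Fin n → ℤ) × ((e : {e : Eb // Ne e ≠ ⊥}) → Ne e.1)) :
    contrT q Ne z = (z.1 ∘ q, fun e => if h : Ne e = ⊥ then 0 else z.2 ⟨e, h⟩) := by
  refine Prod.ext rfl ?_
  funext e
  have h0 : (contrT q Ne z).2 e
      = (if h : Ne e = ⊥ then (0 : ((e : {e : Eb // Ne e ≠ ⊥}) → Ne e.1) →ₗ[ℤ] Ne e)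
          else LinearMap.proj (⟨e, h⟩ : {e : Eb // Ne e ≠ ⊥})) z.2 := rfl
  rw [h0]
  show _ = (if h : Ne e = ⊥ then (0 : Ne e) else z.2 ⟨e, h⟩)
  by_cases h : Ne e = ⊥
  · rw [dif_pos h, dif_pos h]
    rfl
  · rw [dif_neg h, dif_neg h]
    rfl

lemma contrS_apply (c : {e : Eb // Ne e ≠ ⊥} → Fin n → ℤ) :
    contrS Ne c = fun e => if h : Ne e = ⊥ then 0 else c ⟨e, h⟩ := by
  funext e
  have h0 : contrS Ne c e
      = (if h : Ne e = ⊥ then (0 : ({e : Eb // Ne e ≠ ⊥} → Fin n → ℤ) →ₗ[ℤ] (Fin n → ℤ))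
          else LinearMap.proj (⟨e, h⟩ : {e : Eb // Ne e ≠ ⊥})) c := rfl
  rw [h0]
  show _ = (if h : Ne e = ⊥ then (0 : Fin n → ℤ) else c ⟨e, h⟩)
  by_cases h : Ne e = ⊥
  · rw [dif_pos h, dif_pos h]
    rfl
  · rw [dif_neg h, dif_neg h]
    rfl

lemma hT_comp (hqs : ∀ w, q (s w) = w)
    (z : (Vfbar → Fin n → ℤ) × ((e : {e : Eb // Ne e ≠ ⊥}) → Ne e.1)) :
    uFull Ne q s hqs (z, 0) = contrT q Ne z := by
  rw [contrT_apply]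
  refine Prod.ext ?_ ?_
  · show uV q s hqs (z.1, 0) = z.1 ∘ q
    rw [uV_apply]
    show z.1 ∘ q + ((0 : ↥(FF (n := n) s)) : Vf → Fin n → ℤ) = z.1 ∘ q
    rw [ZeroMemClass.coe_zero, add_zero]
  · show uB Ne z.2 = _
    rfl

lemma hS_comp (hw0 : ∀ f : ↥(FF (n := n) s), w0 (deltaF src tgt Ne s f) = (f, 0))
    (c : {e : Eb // Ne e ≠ ⊥} → Fin n → ℤ) :
    (wFull src tgt Ne s w0).symm (c, 0, 0) = contrS Ne c := by
  have h1 : w0 0 = (0, 0) := by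
    have h := hw0 0
    rwa [map_zero] at h
  have h2 : w0.symm ((0 : ↥(FF (n := n) s)), (0 : Fin d → Fin n → ℤ)) = 0 := by
    rw [← h1, w0.symm_apply_apply]
  rw [contrS_apply]
  funext e
  rw [wFull_symm_apply]
  by_cases h : Ne e = ⊥
  · rw [dif_pos h, dif_pos h]
    show (w0.symm (0, 0)) ⟨e, h⟩ = 0
    rw [h2]
    rfl
  · rw [dif_neg h, dif_neg h]
    show (c + delta1 src tgt Ne (((0 : ↥(FF (n := n) s)) : Vf → Fin n → ℤ))) ⟨e, h⟩ = c ⟨e, h⟩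
    rw [ZeroMemClass.coe_zero, map_zero, add_zero]

lemma hu_comp (hqs : ∀ w, q (s w) = w)
    (hq1 : ∀ e, Ne e = ⊥ → q (src e) = q (tgt e))
    (hw0 : ∀ f : ↥(FF (n := n) s), w0 (deltaF src tgt Ne s f) = (f, 0))
    (z : (Vfbar → Fin n → ℤ) × ((e : {e : Eb // Ne e ≠ ⊥}) → Ne e.1))
    (f : ↥(FF (n := n) s)) :
    wFull src tgt Ne s w0 (bMap src tgt Ne (uFull Ne q s hqs (z, f)))
      = (bMap (fun e : {e : Eb // Ne e ≠ ⊥} => q (src e.1)) (fun e => q (tgt e.1))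
          (fun e => Ne e.1) z, f, 0) := by
  set x : Vf → Fin n → ℤ := z.1 ∘ q + (f : Vf → Fin n → ℤ) with hx
  set c := bMap src tgt Ne (uFull Ne q s hqs (z, f)) with hc
  have hce : ∀ e : Eb, c e = x (tgt e) - x (src e) + ((uB Ne z.2) e : Fin n → ℤ) := by
    intro e
    rw [hc]
    have h0 : uFull Ne q s hqs (z, f) = (x, uB Ne z.2) := rfl
    rw [h0, bMap_apply]
  have hstepA : restr0 Ne c = deltaF src tgt Ne s f := by
    funext e0
    have h1 : restr0 Ne c e0 = c e0.1 := rfl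
    rw [h1, hce]
    have hy : ((uB Ne z.2) e0.1 : Fin n → ℤ) = 0 := by
      show ((if h : Ne e0.1 = ⊥ then 0 else z.2 ⟨e0.1, h⟩ : Ne e0.1) : Fin n → ℤ) = 0
      rw [dif_pos e0.2]
      rfl
    rw [hy, add_zero]
    have hq0 : z.1 (q (tgt e0.1)) = z.1 (q (src e0.1)) := by rw [hq1 e0.1 e0.2]
    have hδ : deltaF src tgt Ne s f e0
        = (f : Vf → Fin n → ℤ) (tgt e0.1) - (f : Vf → Fin n → ℤ) (src e0.1) := rfl
    rw [hδ, hx]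
    funext i
    simp [Function.comp, hq0]
  have hstepB : w0 (restr0 Ne c) = (f, 0) := by rw [hstepA, hw0]
  rw [wFull_apply]
  rw [hstepB]
  refine Prod.ext ?_ rfl
  show restr1 Ne c - delta1 src tgt Ne ((f : Vf → Fin n → ℤ))
      = bMap (fun e : {e : Eb // Ne e ≠ ⊥} => q (src e.1)) (fun e => q (tgt e.1))
          (fun e => Ne e.1) z
  funext e1
  have hl : (restr1 Ne c) e1 = c e1.1 := rfl
  have hb : bMap (fun e : {e : Eb // Ne e ≠ ⊥} => q (src e.1)) (fun e => q (tgt e.1))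
        (fun e => Ne e.1) z e1
      = z.1 (q (tgt e1.1)) - z.1 (q (src e1.1)) + (z.2 e1 : Fin n → ℤ) :=
    bMap_apply _ _ _ z.1 z.2 e1
  rw [Pi.sub_apply, hl, hce, hb]
  have hy : ((uB Ne z.2) e1.1 : Fin n → ℤ) = (z.2 e1 : Fin n → ℤ) := by
    show ((if h : Ne e1.1 = ⊥ then 0 else z.2 ⟨e1.1, h⟩ : Ne e1.1) : Fin n → ℤ) = _
    rw [dif_neg e1.2]
  rw [hy]
  have hδ1 : delta1 src tgt Ne ((f : Vf → Fin n → ℤ)) e1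
      = (f : Vf → Fin n → ℤ) (tgt e1.1) - (f : Vf → Fin n → ℤ) (src e1.1) := rfl
  rw [hδ1, hx]
  funext i
  simp [Function.comp]
  ring

end Compat


/-- let `Γ̄ = Γ/Γ₀` be the contraction of `Γ` along the maximal subgraph `Γ₀`
of bounded edges with trivial slope (vertices of `Γ̄` are the connected components of
fibers of `q`, edges of `Γ̄` the edges of `Γ` with nontrivial slope).  Then the natural
map `E¹_G(Γ̄) → E¹_G(Γ)` is an isomorphism and there is a short exact sequence
`0 → E²_G(Γ̄) → E²_G(Γ) → N_G^{g(Γ)-g(Γ̄)} → 0`. -/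
theorem stmt8 {n : ℕ} {Vf Vfbar Eb : Type} [Fintype Vf] [Fintype Vfbar] [Fintype Eb]
    [DecidableEq Vf] [DecidableEq Vfbar]
    (src tgt : Eb → Vf) (Ne : Eb → Submodule ℤ (Fin n → ℤ))
    (q : Vf → Vfbar) (hqsurj : Function.Surjective q)
    (hq1 : ∀ e, Ne e = ⊥ → q (src e) = q (tgt e))
    (hq2 : ∀ v w, q v = q w → Relation.ReflTransGen
      (fun a b => ∃ e, Ne e = ⊥ ∧
        ((src e = a ∧ tgt e = b) ∨ (src e = b ∧ tgt e = a))) v w)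
    (d : ℕ)
    (hd : (d : ℤ) = ((Fintype.card Eb : ℤ) - Fintype.card {e : Eb // Ne e ≠ ⊥})
        - ((Fintype.card Vf : ℤ) - Fintype.card Vfbar))
    (G : Type) [AddCommGroup G] :
    (∃ f : (LinearMap.ker ((bMap (fun e : {e : Eb // Ne e ≠ ⊥} => q (src e.1))
            (fun e => q (tgt e.1)) (fun e => Ne e.1)).rTensor G)) →ₗ[ℤ]
          (LinearMap.ker ((bMap src tgt Ne).rTensor G)),
      (∀ z, (f z : ((Vf → Fin n → ℤ) × ((e : Eb) → Ne e)) ⊗[ℤ] G)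
          = ((contrT q Ne).rTensor G) z) ∧
      Function.Bijective f) ∧
    (∃ (φ : (({e : Eb // Ne e ≠ ⊥} → Fin n → ℤ) ⊗[ℤ] G ⧸
            LinearMap.range ((bMap (fun e : {e : Eb // Ne e ≠ ⊥} => q (src e.1))
              (fun e => q (tgt e.1)) (fun e => Ne e.1)).rTensor G)) →ₗ[ℤ]
          ((Eb → Fin n → ℤ) ⊗[ℤ] G ⧸ LinearMap.range ((bMap src tgt Ne).rTensor G)))
       (ψ : ((Eb → Fin n → ℤ) ⊗[ℤ] G ⧸
            LinearMap.range ((bMap src tgt Ne).rTensor G)) →ₗ[ℤ]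
          (Fin d → (Fin n → ℤ) ⊗[ℤ] G)),
      (∀ x, φ (Submodule.Quotient.mk x)
          = Submodule.Quotient.mk (((contrS Ne).rTensor G) x)) ∧
      Function.Injective φ ∧
      LinearMap.range φ = LinearMap.ker ψ ∧
      Function.Surjective ψ) := by
  classical
  set s : Vfbar → Vf := Function.surjInv hqsurj with hs
  have hqs : ∀ w, q (s w) = w := fun w => Function.surjInv_eq hqsurj w
  obtain ⟨w0, hw0⟩ := exists_w0 src tgt Ne q s hqs hq1 hq2 d hd
  let ι : ((Fin d → Fin n → ℤ) ⊗[ℤ] G) ≃ₗ[ℤ] (Fin d → (Fin n → ℤ) ⊗[ℤ] G) :=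
    (TensorProduct.comm ℤ (Fin d → Fin n → ℤ) G) ≪≫ₗ
      (TensorProduct.piRight ℤ ℤ G (fun _ : Fin d => Fin n → ℤ)) ≪≫ₗ
      (LinearEquiv.piCongrRight (fun _ : Fin d => TensorProduct.comm ℤ G (Fin n → ℤ)))
  exact abstract_contr (bMap src tgt Ne)
    (bMap (fun e : {e : Eb // Ne e ≠ ⊥} => q (src e.1)) (fun e => q (tgt e.1))
      (fun e => Ne e.1))
    (contrT q Ne) (contrS Ne) (uFull Ne q s hqs) (wFull src tgt Ne s w0)
    (fun z f => hu_comp src tgt Ne q s w0 hqs hq1 hw0 z f)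
    (fun z => hT_comp Ne q s hqs z)
    (fun c => hS_comp src tgt Ne s w0 hw0 c) G ι
end
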